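/- arXiv:2103.11948 — 10 statements merged into one kernel-verified Lean document; each statement's English description precedes it below -/
import Mathlib

section
/- If g_λ > 0 for some λ ∈ [0, ∞), then g_λ > 0 for every λ ∈ [0, ∞). -/
/-!
If `g_λ > 0`, some policy has positive expected gain (for `λ > 0` because `exp (-λx) ≥ 1 - λx`).
Switching that policy off in the periods whose spreads exceed `K` makes its gain bounded, and by
dominated convergence keeps the expected gain positive for large `K`. For a bounded gain `X` with
`E X > 0`, the moment generating function `t ↦ E[exp (t X)]` has derivative `E X > 0` at `0`, so
`E[exp (-μ X)] < 1` for some `μ > 0`. Proportional costs make the gain positively homogeneous in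
the policy, so scaling the policy by `μ / λ` gives `U_λ > 0`.
-/

open MeasureTheory ENNReal Real Filter Set

noncomputable section

variable {Ω : Type*}

/-- Entropic utility `U_l(X) = -(1/l) * log E[exp (-l * X)]`, valued in `EReal`
(so that it takes values in `[-∞, ∞)` when `l > 0`). -/
def entU {mΩ : MeasurableSpace Ω} (P : Measure Ω) (l : ℝ) (X : Ω → ℝ) : EReal :=
  (- ENNReal.log (∫⁻ ω, ENNReal.ofReal (Real.exp (-l * X ω)) ∂P)) * ((1 / l : ℝ) : EReal)

/-- A policy: at each time `t < m`, an `F t`-measurable, essentially bounded action in `ℝ^n`. -/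
def IsPolicy {mΩ : MeasurableSpace Ω} (P : Measure Ω) (m n : ℕ) (F : ℕ → MeasurableSpace Ω)
    (a : ℕ → Ω → Fin n → ℝ) : Prop :=
  ∀ t < m, Measurable[F t] (a t) ∧ ∃ C : ℝ, ∀ᵐ ω ∂P, ∀ i, |a t ω i| ≤ C

/-- Terminal gain of a policy under proportional transaction costs:
`G(a) = Σ_{t<m} [ a_t · (H_T^{(t)} - H_t^{(t)}) - γ_t^+ · a_t^+ - γ_t^- · a_t^- ]`. -/
def propGain (m n : ℕ) (Hmid HT : ℕ → Ω → Fin n → ℝ) (γp γm : ℕ → Ω → Fin n → ℝ)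
    (a : ℕ → Ω → Fin n → ℝ) (ω : Ω) : ℝ :=
  ∑ t ∈ Finset.range m, ((∑ i, a t ω i * (HT t ω i - Hmid t ω i))
    - ∑ i, (γp t ω i * max (a t ω i) 0 + γm t ω i * max (-a t ω i) 0))


open ProbabilityTheory Topology

section EntropicUtility

variable {mΩ : MeasurableSpace Ω} {P : Measure Ω} {X : Ω → ℝ}

lemma entU_pos_iff {l : ℝ} (hl : 0 < l) :
    0 < entU P l X ↔ ∫⁻ ω, ENNReal.ofReal (Real.exp (-l * X ω)) ∂P < 1 := by
  rw [entU, EReal.mul_pos_iff]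
  simp [EReal.neg_pos, hl, hl.not_gt]

lemma lintegral_ofReal_exp_lt_one_iff (hX : AEMeasurable X P) {t : ℝ} :
    ∫⁻ ω, ENNReal.ofReal (Real.exp (t * X ω)) ∂P < 1 ↔
      t ∈ integrableExpSet X P ∧ mgf X P t < 1 := by
  have hnn : 0 ≤ᵐ[P] fun ω => Real.exp (t * X ω) := .of_forall fun ω => (Real.exp_pos _).le
  have hmgf (hint : Integrable (fun ω => Real.exp (t * X ω)) P) :
      ∫⁻ ω, ENNReal.ofReal (Real.exp (t * X ω)) ∂P < 1 ↔ mgf X P t < 1 := by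
    rw [← ofReal_integral_eq_lintegral_ofReal hint hnn, ENNReal.ofReal_lt_one, mgf]
  refine ⟨fun h => ?_, fun ⟨hint, h⟩ => (hmgf hint).mpr h⟩
  have hint : Integrable (fun ω => Real.exp (t * X ω)) P :=
    ⟨(hX.const_mul t).exp.aestronglyMeasurable,
      (hasFiniteIntegral_iff_ofReal hnn).mpr (h.trans ENNReal.one_lt_top)⟩
  exact ⟨hint, (hmgf hint).mp h⟩

lemma one_add_mul_integral_le_mgf [IsProbabilityMeasure P] (hX : Integrable X P) {t : ℝ}
    (ht : t ∈ integrableExpSet X P) : 1 + t * P[X] ≤ mgf X P t := by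
  calc 1 + t * P[X] = ∫ ω, (1 + t * X ω) ∂P := by
        rw [integral_add (integrable_const 1) (hX.const_mul t), integral_const_mul]; simp
    _ ≤ mgf X P t := integral_mono ((integrable_const 1).add (hX.const_mul t)) ht
        fun ω => by simpa [add_comm] using Real.add_one_le_exp (t * X ω)

lemma integrableExpSet_eq_univ_of_ae_abs_le [IsFiniteMeasure P] (hX : AEMeasurable X P) {C : ℝ}
    (hC : ∀ᵐ ω ∂P, |X ω| ≤ C) : integrableExpSet X P = univ := by
  refine eq_univ_of_forall fun t => ?_
  refine Integrable.of_bound (hX.const_mul t).exp.aestronglyMeasurable (Real.exp (|t| * C)) ?_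
  filter_upwards [hC] with ω hω
  rw [Real.norm_eq_abs, abs_of_pos (Real.exp_pos _), Real.exp_le_exp]
  calc t * X ω ≤ |t * X ω| := le_abs_self _
    _ = |t| * |X ω| := abs_mul _ _
    _ ≤ |t| * C := mul_le_mul_of_nonneg_left hω (abs_nonneg t)

lemma exists_neg_mgf_lt_one [IsProbabilityMeasure P] (hX : AEMeasurable X P) {C : ℝ}
    (hC : ∀ᵐ ω ∂P, |X ω| ≤ C) (hpos : 0 < P[X]) : ∃ t < 0, mgf X P t < 1 := by
  have hderiv : HasDerivAt (mgf X P) P[X] 0 := by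
    simpa using hasDerivAt_mgf (t := 0)
      (by simp [integrableExpSet_eq_univ_of_ae_abs_le hX hC] : (0 : ℝ) ∈ _)
  have hslope := hderiv.tendsto_slope_zero_left.eventually (lt_mem_nhds hpos)
  obtain ⟨t, hslope_t, ht⟩ := (hslope.and self_mem_nhdsWithin).exists
  refine ⟨t, ht, ?_⟩
  have ht' : t⁻¹ < 0 := inv_lt_zero.mpr ht
  simp only [zero_add, mgf_zero, smul_eq_mul] at hslope_t
  nlinarith [mul_pos_of_neg_of_neg ht' ht]

lemma integral_pos_of_entU_pos [IsProbabilityMeasure P] (hX : Integrable X P) {l : ℝ}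
    (hl : 0 < l) (h : 0 < entU P l X) : 0 < P[X] := by
  obtain ⟨hint, hmgf⟩ :=
    (lintegral_ofReal_exp_lt_one_iff hX.aemeasurable).mp ((entU_pos_iff hl).mp h)
  nlinarith [one_add_mul_integral_le_mgf hX hint]

lemma exists_entU_smul_pos [IsProbabilityMeasure P] (hX : AEMeasurable X P) {C : ℝ}
    (hC : ∀ᵐ ω ∂P, |X ω| ≤ C) (hpos : 0 < P[X]) {l : ℝ} (hl : 0 < l) :
    ∃ c : ℝ, 0 < c ∧ 0 < entU P l (c • X) := by
  obtain ⟨t, ht, hmgf⟩ := exists_neg_mgf_lt_one hX hC hpos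
  refine ⟨-t / l, div_pos (neg_pos.mpr ht) hl, ?_⟩
  have hexp : ∀ ω, -l * (-t / l * X ω) = t * X ω := fun ω => by field_simp
  simp only [entU_pos_iff hl, Pi.smul_apply, smul_eq_mul, hexp]
  exact (lintegral_ofReal_exp_lt_one_iff hX).mpr
    ⟨by simp [integrableExpSet_eq_univ_of_ae_abs_le hX hC], hmgf⟩

end EntropicUtility

section PeriodGain

variable {n : ℕ}

def periodGain (x γp γm v : Fin n → ℝ) : ℝ :=
  ∑ i, v i * x i - ∑ i, (γp i * max (v i) 0 + γm i * max (-v i) 0)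

@[simp]
lemma periodGain_zero (x γp γm : Fin n → ℝ) : periodGain x γp γm 0 = 0 := by
  simp [periodGain]

lemma periodGain_smul (x γp γm v : Fin n → ℝ) {c : ℝ} (hc : 0 ≤ c) :
    periodGain x γp γm (c • v) = c * periodGain x γp γm v := by
  have hmax : ∀ y : ℝ, max (c * y) 0 = c * max y 0 := fun y => by
    rw [mul_max_of_nonneg _ _ hc, mul_zero]
  simp only [periodGain, Pi.smul_apply, smul_eq_mul, ← mul_neg, hmax, mul_sub, Finset.mul_sum]
  congr 1 <;> refine Finset.sum_congr rfl fun i _ => by ring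

lemma abs_periodGain_le (x γp γm v : Fin n → ℝ) {D : ℝ} (hv : ∀ i, |v i| ≤ D) :
    |periodGain x γp γm v| ≤ D * (∑ i, |x i| + ∑ i, (|γp i| + |γm i|)) := by
  have hmax : ∀ y : ℝ, |max y 0| ≤ |y| := fun y => by
    rcases le_total y 0 with h | h <;> simp [h]
  rw [mul_add, Finset.mul_sum, Finset.mul_sum]
  calc |periodGain x γp γm v|
      ≤ |∑ i, v i * x i| + |∑ i, (γp i * max (v i) 0 + γm i * max (-v i) 0)| := abs_sub _ _
    _ ≤ ∑ i, |v i * x i| + ∑ i, |γp i * max (v i) 0 + γm i * max (-v i) 0| :=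
        add_le_add (Finset.abs_sum_le_sum_abs _ _) (Finset.abs_sum_le_sum_abs _ _)
    _ ≤ ∑ i, D * |x i| + ∑ i, D * (|γp i| + |γm i|) := by
        gcongr with i _ i _
        · rw [abs_mul]
          exact mul_le_mul_of_nonneg_right (hv i) (abs_nonneg _)
        · calc |γp i * max (v i) 0 + γm i * max (-v i) 0|
              ≤ |γp i| * |max (v i) 0| + |γm i| * |max (-v i) 0| :=
                (abs_add_le _ _).trans_eq (by rw [abs_mul, abs_mul])
            _ ≤ |γp i| * D + |γm i| * D := by
                gcongr
                · exact (hmax _).trans (hv i)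
                · exact (hmax _).trans ((abs_neg (v i)).le.trans (hv i))
            _ = D * (|γp i| + |γm i|) := by ring

end PeriodGain

section Policy

variable {mΩ : MeasurableSpace Ω} {P : Measure Ω} {m n : ℕ} {F : ℕ → MeasurableSpace Ω}
  {Hmid HT γp γm : ℕ → Ω → Fin n → ℝ} {a : ℕ → Ω → Fin n → ℝ}

lemma propGain_eq_sum_periodGain (ω : Ω) :
    propGain m n Hmid HT γp γm a ω =
      ∑ t ∈ Finset.range m, periodGain (HT t ω - Hmid t ω) (γp t ω) (γm t ω) (a t ω) :=
  rfl

lemma propGain_smul {c : ℝ} (hc : 0 ≤ c) :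
    propGain m n Hmid HT γp γm (c • a) = c • propGain m n Hmid HT γp γm a := by
  ext ω
  simp only [propGain_eq_sum_periodGain, Pi.smul_apply, smul_eq_mul, periodGain_smul _ _ _ _ hc,
    Finset.mul_sum]

lemma propGain_single {t : ℕ} (ht : t < m) :
    propGain m n Hmid HT γp γm (Pi.single t (a t)) =
      fun ω => periodGain (HT t ω - Hmid t ω) (γp t ω) (γm t ω) (a t ω) := by
  ext ω
  rw [propGain_eq_sum_periodGain, Finset.sum_eq_single_of_mem t (Finset.mem_range.mpr ht)]
  · simp
  · intro s _ hst
    simp [hst]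

lemma propGain_indicator (s : ℕ → Set Ω) (ω : Ω) :
    propGain m n Hmid HT γp γm (fun t => (s t).indicator (a t)) ω =
      ∑ t ∈ Finset.range m, (s t).indicator
        (fun ω => periodGain (HT t ω - Hmid t ω) (γp t ω) (γm t ω) (a t ω)) ω := by
  rw [propGain_eq_sum_periodGain]
  refine Finset.sum_congr rfl fun t _ => ?_
  by_cases hω : ω ∈ s t <;> simp [hω]

namespace IsPolicy

lemma const_smul (ha : IsPolicy P m n F a) (c : ℝ) : IsPolicy P m n F (c • a) := by
  intro t ht
  obtain ⟨hmeas, C, hC⟩ := ha t ht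
  refine ⟨hmeas.const_smul c, |c| * C, ?_⟩
  filter_upwards [hC] with ω hω i
  simpa [abs_mul] using mul_le_mul_of_nonneg_left (hω i) (abs_nonneg c)

lemma single (ha : IsPolicy P m n F a) (t : ℕ) : IsPolicy P m n F (Pi.single t (a t)) := by
  intro s hs
  obtain ⟨hmeas, C, hC⟩ := ha s hs
  by_cases hst : s = t
  · subst hst
    exact ⟨by simpa using hmeas, C, by simpa using hC⟩
  · exact ⟨by simp only [Pi.single_apply, hst, if_false]; exact measurable_const, 0, by simp [hst]⟩

lemma indicator (ha : IsPolicy P m n F a) {s : ℕ → Set Ω}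
    (hs : ∀ t < m, MeasurableSet[F t] (s t)) :
    IsPolicy P m n F (fun t => (s t).indicator (a t)) := by
  intro t ht
  obtain ⟨hmeas, C, hC⟩ := ha t ht
  refine ⟨hmeas.indicator (hs t ht), |C|, ?_⟩
  filter_upwards [hC] with ω hω i
  by_cases hωs : ω ∈ s t
  · simpa [indicator_of_mem hωs] using (hω i).trans (le_abs_self C)
  · simp [indicator_of_notMem hωs]

end IsPolicy

end Policy

lemma exists_ae_abs_sum_le {mΩ : MeasurableSpace Ω} {P : Measure Ω} {ι : Type*} (s : Finset ι)
    {f : ι → Ω → ℝ} (h : ∀ i ∈ s, ∃ C, ∀ᵐ ω ∂P, |f i ω| ≤ C) :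
    ∃ C, ∀ᵐ ω ∂P, |∑ i ∈ s, f i ω| ≤ C := by
  choose! C hC using h
  refine ⟨∑ i ∈ s, C i, ?_⟩
  filter_upwards [(eventually_all_finset s).mpr hC] with ω hω
  exact (Finset.abs_sum_le_sum_abs _ _).trans (Finset.sum_le_sum hω)

section Truncation

variable {mΩ : MeasurableSpace Ω} {P : Measure Ω} {m n : ℕ} {F : ℕ → MeasurableSpace Ω}
  {Hmid HT γp γm : ℕ → Ω → Fin n → ℝ} {a : ℕ → Ω → Fin n → ℝ}

/-- Trading only at time `t` is itself a policy, so each period's gain is integrable. -/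
lemma integrable_periodGain
    (hInt : ∀ a, IsPolicy P m n F a → Integrable (propGain m n Hmid HT γp γm a) P)
    (ha : IsPolicy P m n F a) {t : ℕ} (ht : t < m) :
    Integrable (fun ω => periodGain (HT t ω - Hmid t ω) (γp t ω) (γm t ω) (a t ω)) P :=
  propGain_single (a := a) ht ▸ hInt _ (ha.single t)

lemma tendsto_integral_propGain_indicator
    (hInt : ∀ a, IsPolicy P m n F a → Integrable (propGain m n Hmid HT γp γm a) P)
    (ha : IsPolicy P m n F a) {s : ℕ → ℕ → Set Ω}
    (hs_meas : ∀ K, ∀ t < m, MeasurableSet[F t] (s K t))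
    (hs : ∀ t ω, ∀ᶠ K in atTop, ω ∈ s K t) :
    Tendsto (fun K => ∫ ω, propGain m n Hmid HT γp γm (fun t => (s K t).indicator (a t)) ω ∂P)
      atTop (𝓝 (∫ ω, propGain m n Hmid HT γp γm a ω ∂P)) := by
  refine tendsto_integral_of_dominated_convergence
    (fun ω => ∑ t ∈ Finset.range m,
      ‖periodGain (HT t ω - Hmid t ω) (γp t ω) (γm t ω) (a t ω)‖)
    (fun K => (hInt _ (ha.indicator (hs_meas K))).aestronglyMeasurable)
    (integrable_finsetSum _ fun t ht =>
      (integrable_periodGain hInt ha (Finset.mem_range.mp ht)).norm)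
    (fun K => Eventually.of_forall fun ω => ?_) (Eventually.of_forall fun ω => ?_)
  · rw [propGain_indicator]
    exact (norm_sum_le _ _).trans (Finset.sum_le_sum fun t _ => norm_indicator_le_norm_self _ _)
  · refine tendsto_const_nhds.congr' ?_
    filter_upwards [(eventually_all_finset (Finset.range m)).mpr fun t _ => hs t ω] with K hK
    rw [propGain_indicator, propGain_eq_sum_periodGain]
    exact Finset.sum_congr rfl fun t ht => by rw [indicator_of_mem (hK t ht)]

lemma exists_ae_abs_propGain_indicator_le
    (hHmid_bdd : ∀ t < m, ∃ C : ℝ, ∀ᵐ ω ∂P, ∀ i, |Hmid t ω i| ≤ C)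
    (hHT_bdd : ∀ t < m, ∃ C : ℝ, ∀ᵐ ω ∂P, ∀ i, |HT t ω i| ≤ C)
    (ha : IsPolicy P m n F a) (K : ℝ) :
    ∃ C, ∀ᵐ ω ∂P, |propGain m n Hmid HT γp γm
      (fun t => {ω | ∑ i, (|γp t ω i| + |γm t ω i|) ≤ K}.indicator (a t)) ω| ≤ C := by
  simp only [propGain_indicator]
  refine exists_ae_abs_sum_le _ fun t ht => ?_
  replace ht := Finset.mem_range.mp ht
  obtain ⟨D, hD⟩ := (ha t ht).2
  obtain ⟨C₁, hC₁⟩ := hHT_bdd t ht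
  obtain ⟨C₂, hC₂⟩ := hHmid_bdd t ht
  refine ⟨|D| * (n * (|C₁| + |C₂|) + |K|), ?_⟩
  filter_upwards [hD, hC₁, hC₂] with ω hD hC₁ hC₂
  by_cases hω : ω ∈ {ω | ∑ i, (|γp t ω i| + |γm t ω i|) ≤ K}
  · rw [indicator_of_mem hω]
    refine (abs_periodGain_le _ _ _ _ fun i => (hD i).trans (le_abs_self D)).trans ?_
    gcongr
    · calc ∑ i, |(HT t ω - Hmid t ω) i| ≤ ∑ _i : Fin n, (|C₁| + |C₂|) :=
            Finset.sum_le_sum fun i _ => (abs_sub _ _).trans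
              (add_le_add ((hC₁ i).trans (le_abs_self _)) ((hC₂ i).trans (le_abs_self _)))
        _ = n * (|C₁| + |C₂|) := by simp [mul_add]
    · exact (show _ ≤ K from hω).trans (le_abs_self K)
  · rw [indicator_of_notMem hω, abs_zero]
    positivity

lemma exists_bounded_policy_integral_pos
    (hHmid_bdd : ∀ t < m, ∃ C : ℝ, ∀ᵐ ω ∂P, ∀ i, |Hmid t ω i| ≤ C)
    (hHT_bdd : ∀ t < m, ∃ C : ℝ, ∀ᵐ ω ∂P, ∀ i, |HT t ω i| ≤ C)
    (hγp_meas : ∀ t < m, Measurable[F t] (γp t)) (hγm_meas : ∀ t < m, Measurable[F t] (γm t))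
    (hInt : ∀ a, IsPolicy P m n F a → Integrable (propGain m n Hmid HT γp γm a) P)
    (ha : IsPolicy P m n F a) (hpos : 0 < ∫ ω, propGain m n Hmid HT γp γm a ω ∂P) :
    ∃ b, IsPolicy P m n F b ∧ (∃ C, ∀ᵐ ω ∂P, |propGain m n Hmid HT γp γm b ω| ≤ C) ∧
      0 < ∫ ω, propGain m n Hmid HT γp γm b ω ∂P := by
  set s : ℕ → ℕ → Set Ω := fun K t => {ω | ∑ i, (|γp t ω i| + |γm t ω i|) ≤ K}
  have hs_meas : ∀ K, ∀ t < m, MeasurableSet[F t] (s K t) := fun K t ht => by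
    have hp := hγp_meas t ht
    have hm := hγm_meas t ht
    exact measurableSet_le (by fun_prop) measurable_const
  have hs : ∀ t ω, ∀ᶠ K in atTop, ω ∈ s K t := fun t ω =>
    tendsto_natCast_atTop_atTop.eventually_ge_atTop (∑ i, (|γp t ω i| + |γm t ω i|))
  obtain ⟨K, hK⟩ := ((tendsto_integral_propGain_indicator hInt ha hs_meas hs).eventually
    (lt_mem_nhds hpos)).exists
  exact ⟨_, ha.indicator (hs_meas K),
    exists_ae_abs_propGain_indicator_le hHmid_bdd hHT_bdd ha K, hK⟩

end Truncation

theorem stmt_3_general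
    {mΩ : MeasurableSpace Ω} (P : Measure Ω) [IsProbabilityMeasure P]
    (m n : ℕ) (F : ℕ → MeasurableSpace Ω)
    (Hmid HT : ℕ → Ω → Fin n → ℝ)
    (hHmid_bdd : ∀ t < m, ∃ C : ℝ, ∀ᵐ ω ∂P, ∀ i, |Hmid t ω i| ≤ C)
    (hHT_bdd : ∀ t < m, ∃ C : ℝ, ∀ᵐ ω ∂P, ∀ i, |HT t ω i| ≤ C)
    (γp γm : ℕ → Ω → Fin n → ℝ)
    (hγp_meas : ∀ t < m, Measurable[F t] (γp t)) (hγm_meas : ∀ t < m, Measurable[F t] (γm t))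
    (hInt : ∀ a, IsPolicy P m n F a → Integrable (propGain m n Hmid HT γp γm a) P) :
    let g : ℝ → EReal := fun l =>
      ⨆ a : {a : ℕ → Ω → Fin n → ℝ // IsPolicy P m n F a},
        if l = 0 then ((∫ ω, propGain m n Hmid HT γp γm a.1 ω ∂P : ℝ) : EReal)
        else entU P l (propGain m n Hmid HT γp γm a.1)
    (∃ l : ℝ, 0 ≤ l ∧ 0 < g l) → ∀ l : ℝ, 0 ≤ l → 0 < g l := by
  intro g ⟨l₀, hl₀, hg⟩ l hl
  obtain ⟨⟨a, ha⟩, hga⟩ := lt_iSup_iff.mp hg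
  have hEa : 0 < ∫ ω, propGain m n Hmid HT γp γm a ω ∂P := by
    split_ifs at hga with h₀
    · exact_mod_cast hga
    · exact integral_pos_of_entU_pos (hInt a ha) (hl₀.lt_of_ne' h₀) hga
  obtain ⟨b, hb, ⟨C, hC⟩, hEb⟩ :=
    exists_bounded_policy_integral_pos hHmid_bdd hHT_bdd hγp_meas hγm_meas hInt ha hEa
  rcases hl.eq_or_lt with rfl | hl
  · exact lt_iSup_iff.mpr ⟨⟨b, hb⟩, by simpa using hEb⟩
  · obtain ⟨c, hc, hUc⟩ := exists_entU_smul_pos (hInt b hb).aemeasurable hC hEb hl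
    refine lt_iSup_iff.mpr ⟨⟨c • b, hb.const_smul c⟩, ?_⟩
    rwa [if_neg hl.ne', propGain_smul hc.le]

/-- With proportional transaction costs, if `g_λ > 0` for some
`λ ∈ [0,∞)` then `g_λ > 0` for every `λ ∈ [0,∞)` (where `U_0 = E`). -/
theorem stmt_3
    {mΩ : MeasurableSpace Ω} (P : Measure Ω) [IsProbabilityMeasure P]
    (m n : ℕ) (F : ℕ → MeasurableSpace Ω) (hF_mono : Monotone F) (hF_le : ∀ t, F t ≤ mΩ)
    (Hmid HT : ℕ → Ω → Fin n → ℝ)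
    (hHmid_meas : ∀ t < m, Measurable[F t] (Hmid t))
    (hHT_meas : ∀ t < m, Measurable[F m] (HT t))
    (hHmid_bdd : ∀ t < m, ∃ C : ℝ, ∀ᵐ ω ∂P, ∀ i, |Hmid t ω i| ≤ C)
    (hHT_bdd : ∀ t < m, ∃ C : ℝ, ∀ᵐ ω ∂P, ∀ i, |HT t ω i| ≤ C)
    (γp γm : ℕ → Ω → Fin n → ℝ)
    (hγp_meas : ∀ t < m, Measurable[F t] (γp t)) (hγm_meas : ∀ t < m, Measurable[F t] (γm t))
    (hγp_nonneg : ∀ t ω i, 0 ≤ γp t ω i) (hγm_nonneg : ∀ t ω i, 0 ≤ γm t ω i)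
    (hInt : ∀ a, IsPolicy P m n F a → Integrable (propGain m n Hmid HT γp γm a) P) :
    let g : ℝ → EReal := fun l =>
      ⨆ a : {a : ℕ → Ω → Fin n → ℝ // IsPolicy P m n F a},
        if l = 0 then ((∫ ω, propGain m n Hmid HT γp γm a.1 ω ∂P : ℝ) : EReal)
        else entU P l (propGain m n Hmid HT γp γm a.1)
    (∃ l : ℝ, 0 ≤ l ∧ 0 < g l) → ∀ l : ℝ, 0 ≤ l → 0 < g l :=
  stmt_3_general (mΩ := mΩ) P m n F Hmid HT hHmid_bdd hHT_bdd γp γm hγp_meas hγm_meas hInt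
end
end

section
/- Let X be an essentially bounded random variable on a probability space (Ω, 𝓕, P). Then U_λ(X) converges to E[X] as λ → 0 from the right; that is, lim_{λ↓0} −(1/λ)·log E[exp(−λX)] = E[X]. -/
/-! `U_λ(X)` is `-(1/λ) · cgf X (-λ)`, where `cgf` is the cumulant generating function. For bounded
`X` the cgf is differentiable everywhere, vanishes at `0` and has derivative `E[X]` there, so `U_λ(X)`
is a difference quotient of the cgf at `0` and tends to `E[X]`. -/

open MeasureTheory ENNReal Real Filter Set

noncomputable section

variable {Ω : Type*}

namespace ProbabilityTheory

open scoped Topology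

variable {mΩ : MeasurableSpace Ω} {μ : Measure Ω} {X : Ω → ℝ}

lemma integrableExpSet_eq_univ_of_ae_abs_le [IsFiniteMeasure μ] {C : ℝ} (hX : AEMeasurable X μ)
    (hC : ∀ᵐ ω ∂μ, |X ω| ≤ C) : integrableExpSet X μ = univ :=
  eq_univ_of_forall fun _ ↦ integrable_exp_mul_of_mem_Icc (a := -C) (b := C) hX
    (hC.mono fun _ h ↦ abs_le.mp h)

lemma hasDerivAt_cgf_zero [IsProbabilityMeasure μ] (h : 0 ∈ interior (integrableExpSet X μ)) :
    HasDerivAt (cgf X μ) μ[X] 0 := by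
  simpa [deriv_cgf_zero h] using (analyticAt_cgf h).differentiableAt.hasDerivAt

lemma tendsto_neg_inv_mul_cgf_neg [IsProbabilityMeasure μ]
    (h : 0 ∈ interior (integrableExpSet X μ)) :
    Tendsto (fun l ↦ -(1 / l) * cgf X μ (-l)) (𝓝[≠] 0) (𝓝 μ[X]) := by
  have hderiv : HasDerivAt (fun l ↦ cgf X μ (-l)) (-μ[X]) 0 := by
    have hcgf : HasDerivAt (cgf X μ) μ[X] (-0) := by simpa using hasDerivAt_cgf_zero h
    simpa [Function.comp_def] using hcgf.comp (0 : ℝ) (hasDerivAt_neg (0 : ℝ))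
  simpa [cgf_zero] using hderiv.tendsto_slope_zero.neg

end ProbabilityTheory

/-- For essentially bounded `X`,
`U_λ(X) = -(1/λ) log E[exp(-λX)] → E[X]` as `λ ↓ 0`. -/
theorem stmt_4 {mΩ : MeasurableSpace Ω} (P : Measure Ω) [IsProbabilityMeasure P]
    (X : Ω → ℝ) (hXmeas : AEStronglyMeasurable X P) (hXbdd : ∃ C : ℝ, ∀ᵐ ω ∂P, |X ω| ≤ C) :
    Tendsto (fun l : ℝ => -(1 / l) * Real.log (∫ ω, Real.exp (-l * X ω) ∂P))
      (nhdsWithin 0 (Set.Ioi 0)) (nhds (∫ ω, X ω ∂P)) := by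
  obtain ⟨C, hC⟩ := hXbdd
  have h0 : 0 ∈ interior (ProbabilityTheory.integrableExpSet X P) := by
    simp [ProbabilityTheory.integrableExpSet_eq_univ_of_ae_abs_le hXmeas.aemeasurable hC]
  exact (ProbabilityTheory.tendsto_neg_inv_mul_cgf_neg h0).mono_left (nhdsGT_le_nhdsNE 0)
end
end

section
/- The market is free from statistical arbitrage, i.e. g_0 := sup over admissible policies a of E[G(a)] equals 0, if and only if for every t < m and every instrument i the following two conditions hold P-almost surely (as inequalities in the extended reals, so that they hold trivially where the relevant spread is infinite): (1) the marginal purchase price exceeds the expected gains: H_t^{(t,i)} + γ_t^{+,i} ≥ E[H_T^{(t,i)} | 𝓕_t]; and (2) the marginal sale proceeds do not exceed the expected liability: H_t^{(t,i)} − γ_t^{−,i} ≤ E[H_T^{(t,i)} | 𝓕_t]. -/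
open MeasureTheory ENNReal Real Filter Set

noncomputable section

variable {Ω : Type*}

/-- Terminal gain of a policy under proportional costs with possibly infinite spreads
(valued in `[0,∞]`), using the convention `∞ · 0 = 0`. -/
def eGain (m n : ℕ) (Hmid HT : ℕ → Ω → Fin n → ℝ) (γp γm : ℕ → Ω → Fin n → ℝ≥0∞)
    (a : ℕ → Ω → Fin n → ℝ) (ω : Ω) : ℝ :=
  ∑ t ∈ Finset.range m, ((∑ i, a t ω i * (HT t ω i - Hmid t ω i))
    - ∑ i, ((γp t ω i * ENNReal.ofReal (max (a t ω i) 0)).toReal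
        + (γm t ω i * ENNReal.ofReal (max (-a t ω i) 0)).toReal))

/-- Admissibility for proportional costs with possibly infinite spreads: the positive part
of the action vanishes a.s. where the ask spread is infinite, the negative part vanishes a.s.
where the bid spread is infinite, and the terminal gain is integrable. -/
def EAdmissible {mΩ : MeasurableSpace Ω} (P : Measure Ω) (m n : ℕ)
    (F : ℕ → MeasurableSpace Ω) (Hmid HT : ℕ → Ω → Fin n → ℝ)
    (γp γm : ℕ → Ω → Fin n → ℝ≥0∞) (a : ℕ → Ω → Fin n → ℝ) : Prop :=
  IsPolicy P m n F a ∧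
    (∀ t < m, ∀ᵐ ω ∂P, ∀ i, (γp t ω i = ∞ → max (a t ω i) 0 = 0) ∧
      (γm t ω i = ∞ → max (-a t ω i) 0 = 0)) ∧
    Integrable (eGain m n Hmid HT γp γm a) P

/-!
Write `e = E[HT t · i | F t]`. Since the position `x = a t · i` is `F t`-measurable and bounded,
`E[x * (HT - Hmid)] = E[x * (e - Hmid)]`, and under the two conditions `x * (e - Hmid)` is
pointwise at most the transaction cost of `x`: a long position gains at most the ask spread `γp`,
a short one at most the bid spread `γm`. So no admissible policy has positive expected gain, while
the zero policy has gain `0`. Conversely, if the ask condition fails on a non-null set, buying one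
unit on the `F t`-measurable part of it where `γp ≤ K` has strictly positive expected gain. The
bid condition follows by the symmetry `a ↦ -a`, which negates all prices and swaps `γp` with `γm`.
-/

def tradeCost (γp γm : ℝ≥0∞) (x : ℝ) : ℝ :=
  (γp * ENNReal.ofReal (max x 0)).toReal + (γm * ENNReal.ofReal (max (-x) 0)).toReal

lemma tradeCost_neg (γp γm : ℝ≥0∞) (x : ℝ) : tradeCost γp γm (-x) = tradeCost γm γp x := by
  rw [tradeCost, tradeCost, neg_neg, add_comm]

@[simp] lemma tradeCost_zero (γp γm : ℝ≥0∞) : tradeCost γp γm 0 = 0 := by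
  simp [tradeCost]

@[simp] lemma tradeCost_one (γp γm : ℝ≥0∞) : tradeCost γp γm 1 = γp.toReal := by
  simp [tradeCost]

lemma EReal.coe_le_coe_add_coe_ennreal_iff {e h : ℝ} {γ : ℝ≥0∞} :
    (e : EReal) ≤ h + γ ↔ (γ ≠ ∞ → e ≤ h + γ.toReal) := by
  induction γ with
  | top => simp [EReal.add_top_of_ne_bot]
  | coe r => simp [EReal.coe_nnreal_eq_coe_real, ← EReal.coe_add]

lemma EReal.coe_sub_coe_ennreal_le_iff {e h : ℝ} {γ : ℝ≥0∞} :
    (h : EReal) - γ ≤ e ↔ (γ ≠ ∞ → h - γ.toReal ≤ e) := by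
  induction γ with
  | top => simp
  | coe r => simp [EReal.coe_nnreal_eq_coe_real, ← EReal.coe_sub]

lemma mul_sub_le_tradeCost_of_nonneg {x h e : ℝ} {γp : ℝ≥0∞} (γm : ℝ≥0∞) (hx : 0 ≤ x)
    (hask : γp ≠ ∞ → e ≤ h + γp.toReal) (hp : γp = ∞ → max x 0 = 0) :
    x * (e - h) ≤ tradeCost γp γm x := by
  rcases eq_or_ne γp ∞ with hγ | hγ
  · obtain rfl : x = 0 := by simpa [hx] using hp hγ
    simp
  · have : tradeCost γp γm x = x * γp.toReal := by
      simp [tradeCost, max_eq_left hx, max_eq_right (neg_nonpos.2 hx), toReal_ofReal hx, mul_comm]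
    rw [this]
    exact mul_le_mul_of_nonneg_left (by linarith [hask hγ]) hx

lemma mul_sub_le_tradeCost {x h e : ℝ} {γp γm : ℝ≥0∞}
    (hask : γp ≠ ∞ → e ≤ h + γp.toReal) (hbid : γm ≠ ∞ → h - γm.toReal ≤ e)
    (hp : γp = ∞ → max x 0 = 0) (hm : γm = ∞ → max (-x) 0 = 0) :
    x * (e - h) ≤ tradeCost γp γm x := by
  rcases le_total 0 x with hx | hx
  · exact mul_sub_le_tradeCost_of_nonneg γm hx hask hp
  · have := mul_sub_le_tradeCost_of_nonneg (e := -e) (h := -h) γp (neg_nonneg.2 hx)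
      (fun hγ => by linarith [hbid hγ]) hm
    rw [tradeCost_neg] at this
    linarith

lemma MeasureTheory.memLp_top_apply_of_bound {Ω ι : Type*} {m mΩ : MeasurableSpace Ω}
    {P : Measure Ω} (hm : m ≤ mΩ) {f : Ω → ι → ℝ} (hf : Measurable[m] f)
    (hb : ∃ C, ∀ᵐ ω ∂P, ∀ i, |f ω i| ≤ C) (i : ι) : MemLp (fun ω => f ω i) ∞ P := by
  obtain ⟨C, hC⟩ := hb
  exact memLp_top_of_bound ((measurable_pi_apply i).comp (hf.mono hm le_rfl)).aestronglyMeasurable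
    C (by filter_upwards [hC] with ω hω using hω i)

lemma MeasureTheory.integral_mul_sub_condExp {Ω : Type*} {m mΩ : MeasurableSpace Ω}
    {P : Measure Ω} (hm : m ≤ mΩ) [SigmaFinite (P.trim hm)] {f g : Ω → ℝ}
    (hf : StronglyMeasurable[m] f) (hf_top : MemLp f ∞ P) (hg : Integrable g P) :
    ∫ ω, f ω * (g ω - P[g | m] ω) ∂P = 0 := by
  have hfg : Integrable (fun ω => f ω * g ω) P := hg.mul_of_top_right hf_top
  have hfe : Integrable (fun ω => f ω * P[g | m] ω) P := integrable_condExp.mul_of_top_right hf_top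
  have h_pull : ∫ ω, f ω * P[g | m] ω ∂P = ∫ ω, f ω * g ω ∂P :=
    calc ∫ ω, f ω * P[g | m] ω ∂P = ∫ ω, P[f * g | m] ω ∂P :=
          integral_congr_ae (condExp_mul_of_stronglyMeasurable_left hf hfg hg).symm
      _ = ∫ ω, f ω * g ω ∂P := integral_condExp hm
  simp_rw [mul_sub]
  rw [integral_sub hfg hfe, h_pull, sub_self]

lemma MeasureTheory.measure_eq_zero_of_setIntegral_nonpos {α : Type*} {mα : MeasurableSpace α}
    {μ : Measure α} {s : Set α} {f : α → ℝ} (hs : MeasurableSet s) (hfi : IntegrableOn f s μ)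
    (hpos : ∀ x ∈ s, 0 < f x) (h : ∫ x in s, f x ∂μ ≤ 0) : μ s = 0 := by
  by_contra hμ
  have hsupp : Function.support f ∩ s = s := inter_eq_right.2 fun x hx => (hpos x hx).ne'
  have := (setIntegral_pos_iff_support_of_nonneg_ae
    ((ae_restrict_mem hs).mono fun x hx => (hpos x hx).le) hfi).2 (by rwa [hsupp, pos_iff_ne_zero])
  linarith

section Market

variable {mΩ : MeasurableSpace Ω} {P : Measure Ω} {m n : ℕ} {F : ℕ → MeasurableSpace Ω}
  {Hmid HT : ℕ → Ω → Fin n → ℝ} {γp γm : ℕ → Ω → Fin n → ℝ≥0∞}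

lemma eGain_eq (a : ℕ → Ω → Fin n → ℝ) (ω : Ω) :
    eGain m n Hmid HT γp γm a ω = ∑ t ∈ Finset.range m,
      (∑ i, a t ω i * (HT t ω i - Hmid t ω i) - ∑ i, tradeCost (γp t ω i) (γm t ω i) (a t ω i)) :=
  rfl

lemma integral_eGain_nonpos [IsFiniteMeasure P] (hF_le : ∀ t, F t ≤ mΩ)
    (hHT : ∀ t < m, ∀ i, Integrable (fun ω => HT t ω i) P)
    (hcond : ∀ t < m, ∀ i, ∀ᵐ ω ∂P,
      (γp t ω i ≠ ∞ → P[fun ω' => HT t ω' i | F t] ω ≤ Hmid t ω i + (γp t ω i).toReal) ∧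
      (γm t ω i ≠ ∞ → Hmid t ω i - (γm t ω i).toReal ≤ P[fun ω' => HT t ω' i | F t] ω))
    {a : ℕ → Ω → Fin n → ℝ} (ha : EAdmissible P m n F Hmid HT γp γm a) :
    ∫ ω, eGain m n Hmid HT γp γm a ω ∂P ≤ 0 := by
  obtain ⟨hpol, hfin, hint⟩ := ha
  set e : ℕ → Fin n → Ω → ℝ := fun t i => P[fun ω' => HT t ω' i | F t]
  have hterm_int : ∀ t ∈ Finset.range m, ∀ i,
      Integrable (fun ω => a t ω i * (HT t ω i - e t i ω)) P := fun t ht i =>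
    ((hHT t (Finset.mem_range.1 ht) i).sub integrable_condExp).mul_of_top_right
      (memLp_top_apply_of_bound (hF_le t) (hpol t (Finset.mem_range.1 ht)).1
        (hpol t (Finset.mem_range.1 ht)).2 i)
  have hmean : ∫ ω, ∑ t ∈ Finset.range m, ∑ i, a t ω i * (HT t ω i - e t i ω) ∂P = 0 := by
    rw [integral_finsetSum _ fun t ht => integrable_finsetSum _ fun i _ => hterm_int t ht i]
    refine Finset.sum_eq_zero fun t ht => ?_
    rw [integral_finsetSum _ fun i _ => hterm_int t ht i]
    have ht := Finset.mem_range.1 ht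
    exact Finset.sum_eq_zero fun i _ => integral_mul_sub_condExp (hF_le t)
      ((measurable_pi_apply i).comp (hpol t ht).1).stronglyMeasurable
      (memLp_top_apply_of_bound (hF_le t) (hpol t ht).1 (hpol t ht).2 i) (hHT t ht i)
  have hle : ∀ᵐ ω ∂P, eGain m n Hmid HT γp γm a ω ≤
      ∑ t ∈ Finset.range m, ∑ i, a t ω i * (HT t ω i - e t i ω) := by
    have hcost : ∀ᵐ ω ∂P, ∀ t ∈ Finset.range m, ∀ i,
        a t ω i * (e t i ω - Hmid t ω i) ≤ tradeCost (γp t ω i) (γm t ω i) (a t ω i) :=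
      (Finset.range m).eventually_all.2 fun t ht => by
        filter_upwards [ae_all_iff.2 (hcond t (Finset.mem_range.1 ht)),
          hfin t (Finset.mem_range.1 ht)] with ω hc hf i
        exact mul_sub_le_tradeCost (hc i).1 (hc i).2 (hf i).1 (hf i).2
    filter_upwards [hcost] with ω hω
    rw [eGain_eq]
    refine Finset.sum_le_sum fun t ht => ?_
    have hsplit : ∑ i, a t ω i * (HT t ω i - Hmid t ω i) = ∑ i, a t ω i * (HT t ω i - e t i ω)
        + ∑ i, a t ω i * (e t i ω - Hmid t ω i) := by
      rw [← Finset.sum_add_distrib]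
      exact Finset.sum_congr rfl fun i _ => by ring
    linarith [Finset.sum_le_sum fun i (_ : i ∈ Finset.univ) => hω t ht i]
  calc ∫ ω, eGain m n Hmid HT γp γm a ω ∂P
      ≤ ∫ ω, ∑ t ∈ Finset.range m, ∑ i, a t ω i * (HT t ω i - e t i ω) ∂P :=
        integral_mono_ae hint
          (integrable_finsetSum _ fun t ht => integrable_finsetSum _ fun i _ => hterm_int t ht i) hle
    _ = 0 := hmean

lemma eGain_zero : eGain m n Hmid HT γp γm 0 = 0 := by
  funext ω
  simp [eGain_eq]

lemma eAdmissible_zero : EAdmissible P m n F Hmid HT γp γm 0 := by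
  refine ⟨fun t _ => ⟨measurable_const, 0, ae_of_all _ fun ω i => by simp⟩,
    fun t _ => ae_of_all _ fun ω i => by simp, ?_⟩
  rw [eGain_zero]
  exact integrable_zero _ _ P

def buyOn (t : ℕ) (i : Fin n) (S : Set Ω) : ℕ → Ω → Fin n → ℝ :=
  Pi.single t (S.indicator fun _ => Pi.single i 1)

lemma buyOn_apply (t : ℕ) (i : Fin n) (S : Set Ω) (s : ℕ) (ω : Ω) (j : Fin n) :
    buyOn t i S s ω j = if s = t ∧ j = i then S.indicator 1 ω else 0 := by
  by_cases hs : s = t <;> by_cases hj : j = i <;> by_cases hω : ω ∈ S <;>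
    simp [buyOn, hs, hj, hω]

lemma eGain_buyOn {t : ℕ} (ht : t < m) (i : Fin n) (S : Set Ω) :
    eGain m n Hmid HT γp γm (buyOn t i S) =
      S.indicator fun ω => HT t ω i - (Hmid t ω i + (γp t ω i).toReal) := by
  funext ω
  rw [eGain_eq, Finset.sum_eq_single_of_mem t (Finset.mem_range.2 ht)]
  · by_cases hω : ω ∈ S
    · simp [buyOn_apply, hω, apply_ite (tradeCost _ _)]
      ring
    · simp [buyOn_apply, hω]
  · intro s _ hs
    simp [buyOn_apply, hs]

lemma eAdmissible_buyOn {t : ℕ} (ht : t < m) (i : Fin n) {S : Set Ω} (hF : F t ≤ mΩ)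
    (hS : MeasurableSet[F t] S) (hfin : ∀ ω ∈ S, γp t ω i ≠ ∞)
    (hint : IntegrableOn (fun ω => HT t ω i - (Hmid t ω i + (γp t ω i).toReal)) S P) :
    EAdmissible P m n F Hmid HT γp γm (buyOn t i S) := by
  refine ⟨fun s _ => ⟨?_, 1, ae_of_all _ fun ω j => ?_⟩,
    fun s _ => ae_of_all _ fun ω j => ⟨fun hγ => ?_, fun _ => ?_⟩, ?_⟩
  · rcases eq_or_ne s t with rfl | hs
    · simp only [buyOn, Pi.single_eq_same]
      exact measurable_const.indicator hS
    · simp only [buyOn, Pi.single_eq_of_ne hs]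
      exact measurable_const
  · rw [buyOn_apply]
    split_ifs <;> by_cases hω : ω ∈ S <;> simp [hω]
  · rw [buyOn_apply]
    split_ifs with hsj
    · obtain ⟨rfl, rfl⟩ := hsj
      by_cases hω : ω ∈ S
      · exact absurd hγ (hfin ω hω)
      · simp [hω]
    · simp
  · rw [buyOn_apply]
    split_ifs <;> by_cases hω : ω ∈ S <;> simp [hω]
  · rw [eGain_buyOn ht]
    exact hint.integrable_indicator (hF _ hS)

lemma measure_eq_zero_of_ask_lt_condExp [IsFiniteMeasure P] {t : ℕ} (ht : t < m) (i : Fin n)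
    (hF : F t ≤ mΩ) (hH_int : Integrable (fun ω => Hmid t ω i) P)
    (hHT_int : Integrable (fun ω => HT t ω i) P) (hγ_meas : Measurable fun ω => γp t ω i)
    (hle : ∀ a, EAdmissible P m n F Hmid HT γp γm a → ∫ ω, eGain m n Hmid HT γp γm a ω ∂P ≤ 0)
    {S : Set Ω} (hS : MeasurableSet[F t] S) {K : ℝ≥0∞} (hK : K ≠ ∞)
    (hSK : ∀ ω ∈ S, γp t ω i ≤ K)
    (hprofit : ∀ ω ∈ S, Hmid t ω i + (γp t ω i).toReal < P[fun ω' => HT t ω' i | F t] ω) :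
    P S = 0 := by
  have hSm : MeasurableSet S := hF _ hS
  have hγ_int : IntegrableOn (fun ω => (γp t ω i).toReal) S P :=
    Measure.integrableOn_of_bounded (measure_ne_top P S) hγ_meas.ennreal_toReal.aestronglyMeasurable
      (M := K.toReal) <| (ae_restrict_mem hSm).mono fun ω hω => by
        rw [Real.norm_eq_abs, abs_of_nonneg toReal_nonneg]
        exact toReal_mono hK (hSK ω hω)
  have hask_int : IntegrableOn (fun ω => Hmid t ω i + (γp t ω i).toReal) S P :=
    hH_int.integrableOn.add hγ_int
  have hadm := eAdmissible_buyOn (γm := γm) ht i hF hS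
    (fun ω hω => ne_top_of_le_ne_top hK (hSK ω hω)) (hHT_int.integrableOn.sub hask_int)
  have hgain : ∫ ω, eGain m n Hmid HT γp γm (buyOn t i S) ω ∂P =
      ∫ ω in S, P[fun ω' => HT t ω' i | F t] ω - (Hmid t ω i + (γp t ω i).toReal) ∂P := by
    rw [eGain_buyOn ht, integral_indicator hSm, integral_sub hHT_int.integrableOn hask_int,
      integral_sub integrable_condExp.integrableOn hask_int, setIntegral_condExp hF hHT_int hS]
  exact measure_eq_zero_of_setIntegral_nonpos hSm (integrable_condExp.integrableOn.sub hask_int)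
    (fun ω hω => sub_pos.2 (hprofit ω hω)) (hgain ▸ hle _ hadm)

lemma ae_condExp_le_add_ask [IsFiniteMeasure P] {t : ℕ} (ht : t < m) (i : Fin n)
    (hF : F t ≤ mΩ) (hH_meas : Measurable[F t] fun ω => Hmid t ω i)
    (hH_int : Integrable (fun ω => Hmid t ω i) P) (hHT_int : Integrable (fun ω => HT t ω i) P)
    (hγ_meas : Measurable[F t] fun ω => γp t ω i)
    (hle : ∀ a, EAdmissible P m n F Hmid HT γp γm a → ∫ ω, eGain m n Hmid HT γp γm a ω ∂P ≤ 0) :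
    ∀ᵐ ω ∂P, γp t ω i ≠ ∞ → P[fun ω' => HT t ω' i | F t] ω ≤ Hmid t ω i + (γp t ω i).toReal := by
  have hnull : ∀ K : ℕ, P {ω | γp t ω i ≤ K ∧
      Hmid t ω i + (γp t ω i).toReal < P[fun ω' => HT t ω' i | F t] ω} = 0 := fun K =>
    measure_eq_zero_of_ask_lt_condExp ht i hF hH_int hHT_int (hγ_meas.mono hF le_rfl) hle
      ((measurableSet_le hγ_meas measurable_const).inter
        (measurableSet_lt (hH_meas.add hγ_meas.ennreal_toReal) stronglyMeasurable_condExp.measurable))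
      (natCast_ne_top K) (fun ω hω => hω.1) (fun ω hω => hω.2)
  rw [ae_iff]
  refine measure_mono_null (fun ω hω => ?_) (measure_iUnion_null hnull)
  simp only [mem_ofPred_eq, Classical.not_imp, not_le] at hω
  obtain ⟨K, hK⟩ := ENNReal.exists_nat_gt hω.1
  exact mem_iUnion.2 ⟨K, hK.le, hω.2⟩

lemma eGain_neg (a : ℕ → Ω → Fin n → ℝ) :
    eGain m n Hmid HT γp γm (-a) = eGain m n (-Hmid) (-HT) γm γp a := by
  funext ω
  simp only [eGain_eq, Pi.neg_apply, tradeCost_neg]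
  congr! 3 with t _ i
  ring

lemma EAdmissible.neg {a : ℕ → Ω → Fin n → ℝ} (ha : EAdmissible P m n F (-Hmid) (-HT) γm γp a) :
    EAdmissible P m n F Hmid HT γp γm (-a) := by
  obtain ⟨hpol, hfin, hint⟩ := ha
  refine ⟨fun t ht => ⟨(hpol t ht).1.neg, ?_⟩, fun t ht => ?_, eGain_neg a ▸ hint⟩
  · obtain ⟨C, hC⟩ := (hpol t ht).2
    exact ⟨C, by filter_upwards [hC] with ω hω i using by simpa using hω i⟩
  · filter_upwards [hfin t ht] with ω hω i
    simpa [and_comm] using hω i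

lemma ae_sub_bid_le_condExp [IsFiniteMeasure P] {t : ℕ} (ht : t < m) (i : Fin n)
    (hF : F t ≤ mΩ) (hH_meas : Measurable[F t] fun ω => Hmid t ω i)
    (hH_int : Integrable (fun ω => Hmid t ω i) P) (hHT_int : Integrable (fun ω => HT t ω i) P)
    (hγ_meas : Measurable[F t] fun ω => γm t ω i)
    (hle : ∀ a, EAdmissible P m n F Hmid HT γp γm a → ∫ ω, eGain m n Hmid HT γp γm a ω ∂P ≤ 0) :
    ∀ᵐ ω ∂P, γm t ω i ≠ ∞ → Hmid t ω i - (γm t ω i).toReal ≤ P[fun ω' => HT t ω' i | F t] ω := by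
  have hmirror := ae_condExp_le_add_ask (Hmid := -Hmid) (HT := -HT) (γp := γm) (γm := γp) ht i hF
    hH_meas.neg hH_int.neg hHT_int.neg hγ_meas fun a ha => eGain_neg a ▸ hle _ ha.neg
  filter_upwards [hmirror, condExp_neg (μ := P) (fun ω => HT t ω i) (F t)] with ω hω hneg hγ
  have hmirror_ω : P[-fun ω' => HT t ω' i | F t] ω ≤ -Hmid t ω i + (γm t ω i).toReal := hω hγ
  rw [hneg, Pi.neg_apply] at hmirror_ω
  linarith

end Market

theorem stmt_5_general
    {mΩ : MeasurableSpace Ω} (P : Measure Ω) [IsProbabilityMeasure P]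
    (m n : ℕ) (F : ℕ → MeasurableSpace Ω) (hF_le : ∀ t, F t ≤ mΩ)
    (Hmid HT : ℕ → Ω → Fin n → ℝ)
    (hHmid_meas : ∀ t < m, Measurable[F t] (Hmid t))
    (hHT_meas : ∀ t < m, Measurable[F m] (HT t))
    (hHmid_bdd : ∀ t < m, ∃ C : ℝ, ∀ᵐ ω ∂P, ∀ i, |Hmid t ω i| ≤ C)
    (hHT_bdd : ∀ t < m, ∃ C : ℝ, ∀ᵐ ω ∂P, ∀ i, |HT t ω i| ≤ C)
    (γp γm : ℕ → Ω → Fin n → ℝ≥0∞)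
    (hγp_meas : ∀ t < m, Measurable[F t] (γp t)) (hγm_meas : ∀ t < m, Measurable[F t] (γm t)) :
    (⨆ a : {a : ℕ → Ω → Fin n → ℝ // EAdmissible P m n F Hmid HT γp γm a},
        ((∫ ω, eGain m n Hmid HT γp γm a.1 ω ∂P : ℝ) : EReal)) = 0 ↔
      ∀ t < m, ∀ i : Fin n, ∀ᵐ ω ∂P,
        (((P[fun ω' => HT t ω' i | F t]) ω : EReal) ≤ (Hmid t ω i : EReal) + (γp t ω i : EReal)) ∧
        ((Hmid t ω i : EReal) - (γm t ω i : EReal) ≤ ((P[fun ω' => HT t ω' i | F t]) ω : EReal)) := by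
  have hH_int : ∀ t < m, ∀ i, Integrable (fun ω => Hmid t ω i) P := fun t ht i =>
    (memLp_top_apply_of_bound (hF_le t) (hHmid_meas t ht) (hHmid_bdd t ht) i).integrable le_top
  have hHT_int : ∀ t < m, ∀ i, Integrable (fun ω => HT t ω i) P := fun t ht i =>
    (memLp_top_apply_of_bound (hF_le m) (hHT_meas t ht) (hHT_bdd t ht) i).integrable le_top
  simp only [EReal.coe_le_coe_add_coe_ennreal_iff, EReal.coe_sub_coe_ennreal_le_iff]
  constructor
  · intro hsup t ht i
    have hle : ∀ a, EAdmissible P m n F Hmid HT γp γm a →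
        ∫ ω, eGain m n Hmid HT γp γm a ω ∂P ≤ 0 := fun a ha =>
      EReal.coe_nonpos.1 (hsup ▸ le_iSup_of_le (⟨a, ha⟩ : {a // _}) le_rfl)
    have hH_meas := (measurable_pi_apply i).comp (hHmid_meas t ht)
    exact (ae_condExp_le_add_ask ht i (hF_le t) hH_meas (hH_int t ht i) (hHT_int t ht i)
      ((measurable_pi_apply i).comp (hγp_meas t ht)) hle).and
      (ae_sub_bid_le_condExp ht i (hF_le t) hH_meas (hH_int t ht i) (hHT_int t ht i)
      ((measurable_pi_apply i).comp (hγm_meas t ht)) hle)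
  · intro hcond
    refine le_antisymm (iSup_le fun a => EReal.coe_nonpos.2 ?_) ?_
    · exact integral_eGain_nonpos hF_le hHT_int hcond a.2
    · exact le_iSup_of_le (⟨0, eAdmissible_zero⟩ : {a // _}) (by simp [eGain_zero])

/-- The market with proportional costs (possibly infinite spreads) is free
from statistical arbitrage, `g_0 = sup_a E[G(a)] = 0`, if and only if a.s., for each `t < m`
and each instrument `i`, the ask dominates the expected gain and the bid is dominated by the
expected liability (as extended-real inequalities). -/
theorem stmt_5
    {mΩ : MeasurableSpace Ω} (P : Measure Ω) [IsProbabilityMeasure P]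
    (m n : ℕ) (F : ℕ → MeasurableSpace Ω) (hF_mono : Monotone F) (hF_le : ∀ t, F t ≤ mΩ)
    (Hmid HT : ℕ → Ω → Fin n → ℝ)
    (hHmid_meas : ∀ t < m, Measurable[F t] (Hmid t))
    (hHT_meas : ∀ t < m, Measurable[F m] (HT t))
    (hHmid_bdd : ∀ t < m, ∃ C : ℝ, ∀ᵐ ω ∂P, ∀ i, |Hmid t ω i| ≤ C)
    (hHT_bdd : ∀ t < m, ∃ C : ℝ, ∀ᵐ ω ∂P, ∀ i, |HT t ω i| ≤ C)
    (γp γm : ℕ → Ω → Fin n → ℝ≥0∞)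
    (hγp_meas : ∀ t < m, Measurable[F t] (γp t)) (hγm_meas : ∀ t < m, Measurable[F t] (γm t)) :
    (⨆ a : {a : ℕ → Ω → Fin n → ℝ // EAdmissible P m n F Hmid HT γp γm a},
        ((∫ ω, eGain m n Hmid HT γp γm a.1 ω ∂P : ℝ) : EReal)) = 0 ↔
      ∀ t < m, ∀ i : Fin n, ∀ᵐ ω ∂P,
        (((P[fun ω' => HT t ω' i | F t]) ω : EReal) ≤ (Hmid t ω i : EReal) + (γp t ω i : EReal)) ∧
        ((Hmid t ω i : EReal) - (γm t ω i : EReal) ≤ ((P[fun ω' => HT t ω' i | F t]) ω : EReal)) :=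
  stmt_5_general P m n F hF_le Hmid HT hHmid_meas hHT_meas hHmid_bdd hHT_bdd γp γm hγp_meas hγm_meas
end
end

section
/- Suppose transaction costs are zero (all spreads γ_t^{±,i} ≡ 0) and all policies are admissible. Then g_0 := sup over admissible policies a of E[G(a)] equals 0 if and only if the martingale condition E[H_T^{(t,i)} | 𝓕_t] = H_t^{(t,i)} holds P-almost surely for every t < m and every instrument i. -/
open MeasureTheory ENNReal Real Filter Set

noncomputable section

variable {Ω : Type*}

/-- Terminal gain of a policy with zero transaction costs:
`G(a) = Σ_{t<m} a_t · (H_T^{(t)} - H_t^{(t)})`. -/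
def linGain (m n : ℕ) (Hmid HT : ℕ → Ω → Fin n → ℝ)
    (a : ℕ → Ω → Fin n → ℝ) (ω : Ω) : ℝ :=
  ∑ t ∈ Finset.range m, ∑ i, a t ω i * (HT t ω i - Hmid t ω i)

/-
Since `a_t` is bounded and `F_t`-measurable, conditioning on `F_t` gives
`E[G(a)] = Σ_t Σ_i E[a_t^i d_t^i]` with the drifts `d_t^i = E[H_T^{(t,i)} | F_t] - H_t^{(t,i)}`.
As the zero policy gains `0`, `g_0 = 0` says that no policy has positive expected gain.
If all drifts vanish, every policy gains `0`; if some `d_t^i` is not a.s. zero, holding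
`sign d_t^i` units of instrument `i` at time `t` gains `E|d_t^i| > 0`.
-/

theorem iSup_eq_iff_forall_le_of_eq {α ι : Type*} [CompleteLattice α] {f : ι → α} {x : α}
    (i₀ : ι) (hi₀ : f i₀ = x) : ⨆ i, f i = x ↔ ∀ i, f i ≤ x :=
  ⟨fun h i => h ▸ le_iSup f i, fun h => le_antisymm (iSup_le h) (hi₀ ▸ le_iSup f i₀)⟩

section CondExp

variable {𝓕 mΩ : MeasurableSpace Ω} {P : Measure Ω} [IsFiniteMeasure P] {b X Y h : Ω → ℝ}

theorem integral_mul_condExp (h𝓕 : 𝓕 ≤ mΩ) (hb : StronglyMeasurable[𝓕] b) {C : ℝ}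
    (hbC : ∀ᵐ ω ∂P, ‖b ω‖ ≤ C) (hY : Integrable Y P) :
    ∫ ω, b ω * (P[Y|𝓕]) ω ∂P = ∫ ω, b ω * Y ω ∂P := by
  have hbY : Integrable (b * Y) P := hY.bdd_mul (hb.mono h𝓕).aestronglyMeasurable hbC
  calc ∫ ω, b ω * (P[Y|𝓕]) ω ∂P = ∫ ω, (P[b * Y|𝓕]) ω ∂P :=
        integral_congr_ae (condExp_mul_of_stronglyMeasurable_left hb hbY hY).symm
    _ = ∫ ω, b ω * Y ω ∂P := integral_condExp h𝓕

theorem condExp_sub_of_stronglyMeasurable (h𝓕 : 𝓕 ≤ mΩ) (hX : Integrable X P)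
    (hh : StronglyMeasurable[𝓕] h) (hh' : Integrable h P) :
    P[X - h|𝓕] =ᵐ[P] P[X|𝓕] - h := by
  conv_rhs => rw [← condExp_of_stronglyMeasurable (μ := P) h𝓕 hh hh']
  exact condExp_sub hX hh' 𝓕

theorem integral_mul_condExp_sub (h𝓕 : 𝓕 ≤ mΩ) (hb : StronglyMeasurable[𝓕] b) {C : ℝ}
    (hbC : ∀ᵐ ω ∂P, ‖b ω‖ ≤ C) (hX : Integrable X P) (hh : StronglyMeasurable[𝓕] h)
    (hh' : Integrable h P) :
    ∫ ω, b ω * ((P[X|𝓕]) ω - h ω) ∂P = ∫ ω, b ω * (X ω - h ω) ∂P := by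
  calc ∫ ω, b ω * ((P[X|𝓕]) ω - h ω) ∂P = ∫ ω, b ω * (P[X - h|𝓕]) ω ∂P := by
        refine integral_congr_ae ?_
        filter_upwards [condExp_sub_of_stronglyMeasurable h𝓕 hX hh hh'] with ω hω
        rw [hω, Pi.sub_apply]
    _ = ∫ ω, b ω * (X ω - h ω) ∂P := integral_mul_condExp h𝓕 hb hbC (hX.sub hh')

theorem integrable_apply_of_ae_abs_le {ι : Type*} {f : Ω → ι → ℝ} (h𝓕 : 𝓕 ≤ mΩ)
    (hf : Measurable[𝓕] f) (hC : ∃ C : ℝ, ∀ᵐ ω ∂P, ∀ i, |f ω i| ≤ C) (i : ι) :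
    Integrable (fun ω => f ω i) P :=
  let ⟨C, hC⟩ := hC
  .of_bound ((measurable_pi_apply i).comp (hf.mono h𝓕 le_rfl)).aestronglyMeasurable C
    (by filter_upwards [hC] with ω hω using hω i)

end CondExp

section Market

variable {mΩ : MeasurableSpace Ω} {P : Measure Ω} {m n : ℕ} {F : ℕ → MeasurableSpace Ω}
  {Hmid HT : ℕ → Ω → Fin n → ℝ} {a : ℕ → Ω → Fin n → ℝ} {t : ℕ}

theorem IsPolicy.stronglyMeasurable_apply (ha : IsPolicy P m n F a) (ht : t < m) (i : Fin n) :
    StronglyMeasurable[F t] (fun ω => a t ω i) :=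
  ((measurable_pi_apply i).comp (ha t ht).1).stronglyMeasurable

theorem IsPolicy.exists_ae_norm_le (ha : IsPolicy P m n F a) (ht : t < m) :
    ∃ C, ∀ i, ∀ᵐ ω ∂P, ‖a t ω i‖ ≤ C := by
  obtain ⟨C, hC⟩ := (ha t ht).2
  exact ⟨C, fun i => by filter_upwards [hC] with ω hω using hω i⟩

theorem IsPolicy.integrable_mul [IsFiniteMeasure P] (ha : IsPolicy P m n F a) (hF : F t ≤ mΩ)
    (ht : t < m) (i : Fin n) {Y : Ω → ℝ} (hY : Integrable Y P) :
    Integrable (fun ω => a t ω i * Y ω) P :=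
  let ⟨_, hC⟩ := ha.exists_ae_norm_le ht
  hY.bdd_mul ((ha.stronglyMeasurable_apply ht i).mono hF).aestronglyMeasurable (hC i)

theorem isPolicy_zero : IsPolicy P m n F 0 :=
  fun _ _ => ⟨measurable_const, 0, ae_of_all _ fun _ _ => by simp⟩

theorem linGain_zero : linGain m n Hmid HT 0 = (0 : Ω → ℝ) := by
  ext; simp [linGain]

theorem integral_linGain_eq_sum [IsFiniteMeasure P] (hF_le : ∀ t, F t ≤ mΩ)
    (hHmid_meas : ∀ t < m, Measurable[F t] (Hmid t))
    (hHT_int : ∀ t < m, ∀ i, Integrable (fun ω => HT t ω i) P)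
    (hHmid_int : ∀ t < m, ∀ i, Integrable (fun ω => Hmid t ω i) P) (ha : IsPolicy P m n F a) :
    ∫ ω, linGain m n Hmid HT a ω ∂P = ∑ t ∈ Finset.range m, ∑ i,
      ∫ ω, a t ω i * ((P[fun ω => HT t ω i|F t]) ω - Hmid t ω i) ∂P := by
  have hterm : ∀ t ∈ Finset.range m, ∀ i,
      Integrable (fun ω => a t ω i * (HT t ω i - Hmid t ω i)) P := by
    intro t ht i
    rw [Finset.mem_range] at ht
    exact ha.integrable_mul (hF_le t) ht i ((hHT_int t ht i).sub (hHmid_int t ht i))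
  unfold linGain
  rw [integral_finsetSum _ fun t ht => integrable_finsetSum _ fun i _ => hterm t ht i]
  refine Finset.sum_congr rfl fun t ht => ?_
  rw [integral_finsetSum _ fun i _ => hterm t ht i]
  refine Finset.sum_congr rfl fun i _ => ?_
  rw [Finset.mem_range] at ht
  obtain ⟨C, hC⟩ := ha.exists_ae_norm_le ht
  exact (integral_mul_condExp_sub (hF_le t) (ha.stronglyMeasurable_apply ht i) (hC i)
    (hHT_int t ht i) ((measurable_pi_apply i).comp (hHmid_meas t ht)).stronglyMeasurable
    (hHmid_int t ht i)).symm

def singlePolicy (t : ℕ) (i : Fin n) (b : Ω → ℝ) : ℕ → Ω → Fin n → ℝ :=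
  fun t' ω j => if t' = t ∧ j = i then b ω else 0

theorem isPolicy_singlePolicy {b : Ω → ℝ} (hb : Measurable[F t] b) {C : ℝ}
    (hC : ∀ᵐ ω ∂P, |b ω| ≤ C) (i : Fin n) : IsPolicy P m n F (singlePolicy t i b) := by
  intro t' _
  refine ⟨@measurable_pi_lambda _ _ _ (F t') _ _ fun j => ?_, |C|, ?_⟩
  · by_cases h : t' = t ∧ j = i
    · obtain ⟨rfl, rfl⟩ := h
      simpa [singlePolicy] using hb
    · simp only [singlePolicy, h, if_false]
      exact measurable_const
  · filter_upwards [hC] with ω hω j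
    unfold singlePolicy
    split_ifs
    · exact hω.trans (le_abs_self C)
    · simp

theorem linGain_singlePolicy (ht : t < m) (i : Fin n) (b : Ω → ℝ) (ω : Ω) :
    linGain m n Hmid HT (singlePolicy t i b) ω = b ω * (HT t ω i - Hmid t ω i) := by
  simp [linGain, singlePolicy, ite_and, ite_mul, ht]

theorem integral_linGain_eq_zero_of_martingale [IsFiniteMeasure P] (hF_le : ∀ t, F t ≤ mΩ)
    (hHmid_meas : ∀ t < m, Measurable[F t] (Hmid t))
    (hHT_int : ∀ t < m, ∀ i, Integrable (fun ω => HT t ω i) P)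
    (hHmid_int : ∀ t < m, ∀ i, Integrable (fun ω => Hmid t ω i) P)
    (hmart : ∀ t < m, ∀ i : Fin n, P[fun ω => HT t ω i|F t] =ᵐ[P] fun ω => Hmid t ω i)
    (ha : IsPolicy P m n F a) :
    ∫ ω, linGain m n Hmid HT a ω ∂P = 0 := by
  rw [integral_linGain_eq_sum hF_le hHmid_meas hHT_int hHmid_int ha]
  refine Finset.sum_eq_zero fun t ht => Finset.sum_eq_zero fun i _ => integral_eq_zero_of_ae ?_
  filter_upwards [hmart t (Finset.mem_range.1 ht) i] with ω hω
  simp [hω]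

theorem condExp_ae_eq_of_forall_integral_linGain_nonpos [IsFiniteMeasure P] {i : Fin n}
    (ht : t < m) (hF : F t ≤ mΩ) (hh : Measurable[F t] (fun ω => Hmid t ω i))
    (hX_int : Integrable (fun ω => HT t ω i) P) (hh_int : Integrable (fun ω => Hmid t ω i) P)
    (hG : ∀ a, IsPolicy P m n F a → ∫ ω, linGain m n Hmid HT a ω ∂P ≤ 0) :
    P[fun ω => HT t ω i|F t] =ᵐ[P] fun ω => Hmid t ω i := by
  set d := P[fun ω => HT t ω i|F t] - fun ω => Hmid t ω i with hd_def
  have hd : Measurable[F t] d := stronglyMeasurable_condExp.measurable.sub hh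
  set s : Ω → ℝ := fun ω => if 0 ≤ d ω then 1 else -1
  have hs : Measurable[F t] s :=
    Measurable.ite (measurableSet_le measurable_const hd) measurable_const measurable_const
  have hs_abs : ∀ ω, |s ω| ≤ 1 := fun ω => by by_cases h : 0 ≤ d ω <;> simp [s, h]
  have hsd : ∀ ω, s ω * d ω = |d ω| := fun ω => by
    by_cases h : 0 ≤ d ω
    · simp [s, h, abs_of_nonneg h]
    · simp [s, h, abs_of_neg (not_le.1 h)]
  have hd_abs : ∫ ω, |d ω| ∂P ≤ 0 := calc
    ∫ ω, |d ω| ∂P = ∫ ω, s ω * ((P[fun ω => HT t ω i|F t]) ω - Hmid t ω i) ∂P := by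
        simp_rw [← hsd, hd_def, Pi.sub_apply]
    _ = ∫ ω, s ω * (HT t ω i - Hmid t ω i) ∂P :=
        integral_mul_condExp_sub hF hs.stronglyMeasurable
          (ae_of_all _ fun ω => (hs_abs ω : ‖s ω‖ ≤ 1)) hX_int hh.stronglyMeasurable hh_int
    _ = ∫ ω, linGain m n Hmid HT (singlePolicy t i s) ω ∂P := by
        simp_rw [linGain_singlePolicy ht]
    _ ≤ 0 := hG _ (isPolicy_singlePolicy hs (ae_of_all _ hs_abs) i)
  have hd_zero : (fun ω => |d ω|) =ᵐ[P] 0 :=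
    (integral_eq_zero_iff_of_nonneg (fun ω => abs_nonneg (d ω))
      (integrable_condExp.sub hh_int).abs).1
      (le_antisymm hd_abs (integral_nonneg fun ω => abs_nonneg (d ω)))
  filter_upwards [hd_zero] with ω hω
  simpa [hd_def, sub_eq_zero] using hω

end Market

theorem stmt_6_general
    {mΩ : MeasurableSpace Ω} (P : Measure Ω) [IsProbabilityMeasure P]
    (m n : ℕ) (F : ℕ → MeasurableSpace Ω) (hF_le : ∀ t, F t ≤ mΩ)
    (Hmid HT : ℕ → Ω → Fin n → ℝ)
    (hHmid_meas : ∀ t < m, Measurable[F t] (Hmid t))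
    (hHT_meas : ∀ t < m, Measurable[F m] (HT t))
    (hHmid_bdd : ∀ t < m, ∃ C : ℝ, ∀ᵐ ω ∂P, ∀ i, |Hmid t ω i| ≤ C)
    (hHT_bdd : ∀ t < m, ∃ C : ℝ, ∀ᵐ ω ∂P, ∀ i, |HT t ω i| ≤ C)
    :
    (⨆ a : {a : ℕ → Ω → Fin n → ℝ // IsPolicy P m n F a},
        ((∫ ω, linGain m n Hmid HT a.1 ω ∂P : ℝ) : EReal)) = 0 ↔
      ∀ t < m, ∀ i : Fin n,
        (P[fun ω => HT t ω i | F t]) =ᵐ[P] fun ω => Hmid t ω i := by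
  have hHT_int : ∀ t < m, ∀ i, Integrable (fun ω => HT t ω i) P := fun t ht =>
    integrable_apply_of_ae_abs_le (hF_le m) (hHT_meas t ht) (hHT_bdd t ht)
  have hHmid_int : ∀ t < m, ∀ i, Integrable (fun ω => Hmid t ω i) P := fun t ht =>
    integrable_apply_of_ae_abs_le (hF_le t) (hHmid_meas t ht) (hHmid_bdd t ht)
  rw [iSup_eq_iff_forall_le_of_eq ⟨0, isPolicy_zero⟩ (by simp [linGain_zero])]
  simp only [EReal.coe_nonpos]
  exact ⟨fun hG t ht i => condExp_ae_eq_of_forall_integral_linGain_nonpos ht (hF_le t)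
      ((measurable_pi_apply i).comp (hHmid_meas t ht)) (hHT_int t ht i) (hHmid_int t ht i)
      fun a ha => hG ⟨a, ha⟩,
    fun hmart a => (integral_linGain_eq_zero_of_martingale hF_le hHmid_meas hHT_int hHmid_int
      hmart a.2).le⟩

/-- With zero transaction costs, `g_0 = sup_a E[G(a)] = 0` if and only if
each instrument satisfies the martingale condition `E[H_T^{(t,i)} | F_t] = H_t^{(t,i)}` a.s. -/
theorem stmt_6
    {mΩ : MeasurableSpace Ω} (P : Measure Ω) [IsProbabilityMeasure P]
    (m n : ℕ) (F : ℕ → MeasurableSpace Ω) (hF_mono : Monotone F) (hF_le : ∀ t, F t ≤ mΩ)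
    (Hmid HT : ℕ → Ω → Fin n → ℝ)
    (hHmid_meas : ∀ t < m, Measurable[F t] (Hmid t))
    (hHT_meas : ∀ t < m, Measurable[F m] (HT t))
    (hHmid_bdd : ∀ t < m, ∃ C : ℝ, ∀ᵐ ω ∂P, ∀ i, |Hmid t ω i| ≤ C)
    (hHT_bdd : ∀ t < m, ∃ C : ℝ, ∀ᵐ ω ∂P, ∀ i, |HT t ω i| ≤ C)
    :
    (⨆ a : {a : ℕ → Ω → Fin n → ℝ // IsPolicy P m n F a},
        ((∫ ω, linGain m n Hmid HT a.1 ω ∂P : ℝ) : EReal)) = 0 ↔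
      ∀ t < m, ∀ i : Fin n,
        (P[fun ω => HT t ω i | F t]) =ᵐ[P] fun ω => Hmid t ω i :=
  stmt_6_general P m n F hF_le Hmid HT hHmid_meas hHT_meas hHmid_bdd hHT_bdd
end
end

section
/- Suppose that for each t < m and each action vector a ∈ ℝ^n, (1/ε)·c_t(εa) converges, as ε ↓ 0, to γ_t^+·a^+ + γ_t^−·a^− (a monotone limit, by convexity), where γ_t^+, γ_t^− are 𝓕_t-measurable with values in [0,∞]^n. For an admissible policy a define the linearized gain G̃(a) := Σ_{t<m} [ a_t·(H_T^{(t)} − H_t^{(t)}) − γ_t^+·a_t^+ − γ_t^−·a_t^− ]. Then sup over admissible policies a of E[G̃(a)] equals 0 if and only if sup over admissible policies a of E[G(a)] equals 0. -/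
/-!
Convexity and `c_t(0) = 0` make `ε ↦ c_t(εx)/ε` nondecreasing on `(0, ∞)`, so its limit at `0⁺`,
the marginal cost `γ_t⁺·x⁺ + γ_t⁻·x⁻`, is at most `c_t(x)`. Hence `G(a) ≤ G̃(a)` pointwise, and the
zero policy shows that both suprema are nonnegative.

Conversely, if `E[G̃(a)] > 0`, scale `a` down: `E[G(εa)] = ε (E[a·ΔH] - E[Σ_t c_t(εa_t)] / ε)`,
and `c_t(εa_t)/ε` decreases to the marginal cost of `a_t` while staying below `c_t(a_t)`, which
is integrable. By dominated convergence the bracket tends to `E[G̃(a)] > 0`, so `G(εa)` has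
positive expectation for small `ε`.
-/

open MeasureTheory ENNReal Real Filter Set

noncomputable section

variable {Ω : Type*}

/-- Terminal gain of a policy under generalized transaction costs `c`. -/
def genGain (m n : ℕ) (Hmid HT : ℕ → Ω → Fin n → ℝ) (c : ℕ → Ω → (Fin n → ℝ) → ℝ≥0∞)
    (a : ℕ → Ω → Fin n → ℝ) (ω : Ω) : ℝ :=
  ∑ t ∈ Finset.range m, ((∑ i, a t ω i * (HT t ω i - Hmid t ω i)) - (c t ω (a t ω)).toReal)

/-- A policy is admissible for generalized costs `c` if it is a policy, its cost is a.s. finite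
at every trading time, and the total cost is integrable. -/
def GenAdmissible {mΩ : MeasurableSpace Ω} (P : Measure Ω) (m n : ℕ)
    (F : ℕ → MeasurableSpace Ω) (c : ℕ → Ω → (Fin n → ℝ) → ℝ≥0∞)
    (a : ℕ → Ω → Fin n → ℝ) : Prop :=
  IsPolicy P m n F a ∧ (∀ t < m, ∀ᵐ ω ∂P, c t ω (a t ω) ≠ ∞) ∧
    Integrable (fun ω => ∑ t ∈ Finset.range m, (c t ω (a t ω)).toReal) P

section Subhomogeneous

variable {E : Type*} [AddCommGroup E] [Module ℝ E] {f : E → ℝ≥0∞}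

theorem apply_smul_le_of_convex
    (hconv : ∀ x y : E, ∀ s : ℝ, 0 ≤ s → s ≤ 1 →
      f (s • x + (1 - s) • y) ≤ ENNReal.ofReal s * f x + ENNReal.ofReal (1 - s) * f y)
    (h0 : f 0 = 0) (x : E) (s : ℝ) (hs0 : 0 ≤ s) (hs1 : s ≤ 1) :
    f (s • x) ≤ ENNReal.ofReal s * f x := by
  simpa [h0] using hconv x 0 s hs0 hs1

theorem monotoneOn_apply_smul_div
    (hsub : ∀ x : E, ∀ s : ℝ, 0 ≤ s → s ≤ 1 → f (s • x) ≤ ENNReal.ofReal s * f x) (x : E) :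
    MonotoneOn (fun ε : ℝ => f (ε • x) / ENNReal.ofReal ε) (Ioi 0) := by
  intro ε (hε : 0 < ε) δ (hδ : 0 < δ) hεδ
  have hε' : ENNReal.ofReal ε ≠ 0 := by simpa using hε
  rw [ENNReal.div_le_iff hε' ENNReal.ofReal_ne_top]
  calc f (ε • x) = f ((ε / δ) • δ • x) := by rw [smul_smul, div_mul_cancel₀ _ hδ.ne']
    _ ≤ ENNReal.ofReal (ε / δ) * f (δ • x) :=
        hsub _ _ (div_nonneg hε.le hδ.le) ((div_le_one hδ).2 hεδ)
    _ = f (δ • x) / ENNReal.ofReal δ * ENNReal.ofReal ε := by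
        rw [ENNReal.ofReal_div_of_pos hδ, div_eq_mul_inv, div_eq_mul_inv]
        ring

theorem apply_smul_div_le
    (hsub : ∀ x : E, ∀ s : ℝ, 0 ≤ s → s ≤ 1 → f (s • x) ≤ ENNReal.ofReal s * f x) (x : E)
    {ε : ℝ} (hε : 0 < ε) (hε1 : ε ≤ 1) :
    f (ε • x) / ENNReal.ofReal ε ≤ f x := by
  simpa using monotoneOn_apply_smul_div hsub x hε (mem_Ioi.2 one_pos) hε1

theorem le_of_tendsto_apply_smul_div
    (hsub : ∀ x : E, ∀ s : ℝ, 0 ≤ s → s ≤ 1 → f (s • x) ≤ ENNReal.ofReal s * f x) (x : E)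
    {g : ℝ≥0∞}
    (hg : Tendsto (fun ε : ℝ => f (ε • x) / ENNReal.ofReal ε) (nhdsWithin 0 (Ioi 0)) (nhds g)) :
    g ≤ f x :=
  le_of_tendsto hg <|
    eventually_of_mem (Ioc_mem_nhdsGT one_pos) fun _ hε => apply_smul_div_le hsub x hε.1 hε.2

end Subhomogeneous

theorem EReal.iSup_coe_eq_zero_iff {ι : Type*} {f : ι → ℝ} (h : ∃ i, 0 ≤ f i) :
    (⨆ i, (f i : EReal)) = 0 ↔ ∀ i, f i ≤ 0 := by
  refine ⟨fun h0 i => EReal.coe_nonpos.1 (h0 ▸ le_iSup (fun i => (f i : EReal)) i), fun hle => ?_⟩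
  obtain ⟨i, hi⟩ := h
  exact le_antisymm (iSup_le fun i => EReal.coe_nonpos.2 (hle i))
    (le_iSup_of_le i (EReal.coe_nonneg.2 hi))

def tradingGain (m n : ℕ) (Hmid HT : ℕ → Ω → Fin n → ℝ) (a : ℕ → Ω → Fin n → ℝ) (ω : Ω) : ℝ :=
  ∑ t ∈ Finset.range m, ∑ i, a t ω i * (HT t ω i - Hmid t ω i)

def totalCost {n : ℕ} (m : ℕ) (c : ℕ → Ω → (Fin n → ℝ) → ℝ≥0∞) (a : ℕ → Ω → Fin n → ℝ)
    (ω : Ω) : ℝ≥0∞ :=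
  ∑ t ∈ Finset.range m, c t ω (a t ω)

def marginalCost {n : ℕ} (γp γm : ℕ → Ω → Fin n → ℝ≥0∞) (t : ℕ) (ω : Ω) (x : Fin n → ℝ) :
    ℝ≥0∞ :=
  ∑ i, (γp t ω i * ENNReal.ofReal (max (x i) 0) + γm t ω i * ENNReal.ofReal (max (-x i) 0))

def totalMarginalCost (m n : ℕ) (γp γm : ℕ → Ω → Fin n → ℝ≥0∞) (a : ℕ → Ω → Fin n → ℝ)
    (ω : Ω) : ℝ≥0∞ :=
  ∑ t ∈ Finset.range m, marginalCost γp γm t ω (a t ω)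

def HasMarginalCosts {n : ℕ} (m : ℕ) (c : ℕ → Ω → (Fin n → ℝ) → ℝ≥0∞)
    (γp γm : ℕ → Ω → Fin n → ℝ≥0∞) : Prop :=
  ∀ t < m, ∀ ω, ∀ x : Fin n → ℝ,
    Tendsto (fun ε : ℝ => c t ω (ε • x) / ENNReal.ofReal ε) (nhdsWithin 0 (Ioi 0))
      (nhds (marginalCost γp γm t ω x))

section Market

variable {mΩ : MeasurableSpace Ω} {P : Measure Ω} {m n : ℕ} {F : ℕ → MeasurableSpace Ω}
  {Hmid HT : ℕ → Ω → Fin n → ℝ} {c : ℕ → Ω → (Fin n → ℝ) → ℝ≥0∞}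
  {γp γm : ℕ → Ω → Fin n → ℝ≥0∞} {a : ℕ → Ω → Fin n → ℝ}

theorem IsPolicy.measurable (ha : IsPolicy P m n F a) (hF_le : ∀ t, F t ≤ mΩ) {t : ℕ}
    (ht : t < m) : Measurable (a t) :=
  (ha t ht).1.mono (hF_le t) le_rfl

theorem integrable_apply_of_ae_abs_le_s7 [IsFiniteMeasure P] {X : Ω → Fin n → ℝ}
    (hX : Measurable X) (hbdd : ∃ C : ℝ, ∀ᵐ ω ∂P, ∀ i, |X ω i| ≤ C) (i : Fin n) :
    Integrable (fun ω => X ω i) P := by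
  obtain ⟨C, hC⟩ := hbdd
  exact .of_bound hX.eval.aestronglyMeasurable C (hC.mono fun ω h => by simpa using h i)

theorem integrable_tradingGain [IsFiniteMeasure P] (hF_le : ∀ t, F t ≤ mΩ)
    (hHmid_meas : ∀ t < m, Measurable[F t] (Hmid t))
    (hHT_meas : ∀ t < m, Measurable[F m] (HT t))
    (hHmid_bdd : ∀ t < m, ∃ C : ℝ, ∀ᵐ ω ∂P, ∀ i, |Hmid t ω i| ≤ C)
    (hHT_bdd : ∀ t < m, ∃ C : ℝ, ∀ᵐ ω ∂P, ∀ i, |HT t ω i| ≤ C)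
    (ha : IsPolicy P m n F a) : Integrable (tradingGain m n Hmid HT a) P := by
  refine integrable_finsetSum _ fun t ht => integrable_finsetSum _ fun i _ => ?_
  rw [Finset.mem_range] at ht
  obtain ⟨C, hC⟩ := (ha t ht).2
  have hT := integrable_apply_of_ae_abs_le_s7 ((hHT_meas t ht).mono (hF_le m) le_rfl) (hHT_bdd t ht) i
  have hM := integrable_apply_of_ae_abs_le_s7 ((hHmid_meas t ht).mono (hF_le t) le_rfl)
    (hHmid_bdd t ht) i
  exact (hT.sub hM).bdd_mul (ha.measurable hF_le ht).eval.aestronglyMeasurable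
    (hC.mono fun ω h => by simpa using h i)

theorem tradingGain_smul (ε : ℝ) (ω : Ω) :
    tradingGain m n Hmid HT (fun t ω => ε • a t ω) ω = ε * tradingGain m n Hmid HT a ω := by
  simp [tradingGain, Finset.mul_sum, mul_assoc]

theorem lintegral_totalCost (ha : GenAdmissible P m n F c a) :
    ∫⁻ ω, totalCost m c a ω ∂P
      = ENNReal.ofReal (∫ ω, ∑ t ∈ Finset.range m, (c t ω (a t ω)).toReal ∂P) := by
  rw [ofReal_integral_eq_lintegral_ofReal ha.2.2
    (ae_of_all _ fun ω => Finset.sum_nonneg fun _ _ => toReal_nonneg)]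
  refine lintegral_congr_ae ?_
  filter_upwards [(Finset.range m).eventually_all.2 fun t ht => ha.2.1 t (Finset.mem_range.1 ht)]
    with ω hfin
  rw [totalCost, ENNReal.ofReal_sum_of_nonneg fun _ _ => toReal_nonneg]
  exact Finset.sum_congr rfl fun t ht => (ofReal_toReal (hfin t ht)).symm

theorem lintegral_totalCost_ne_top (ha : GenAdmissible P m n F c a) :
    ∫⁻ ω, totalCost m c a ω ∂P ≠ ∞ := by
  rw [lintegral_totalCost ha]
  exact ofReal_ne_top

theorem integral_genGain (ha : GenAdmissible P m n F c a)
    (hint : Integrable (tradingGain m n Hmid HT a) P) :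
    ∫ ω, genGain m n Hmid HT c a ω ∂P
      = ∫ ω, tradingGain m n Hmid HT a ω ∂P - (∫⁻ ω, totalCost m c a ω ∂P).toReal := by
  have hsplit : genGain m n Hmid HT c a
      = fun ω => tradingGain m n Hmid HT a ω - ∑ t ∈ Finset.range m, (c t ω (a t ω)).toReal := by
    ext ω
    rw [genGain, tradingGain, Finset.sum_sub_distrib]
  rw [hsplit, integral_sub hint ha.2.2, lintegral_totalCost ha,
    toReal_ofReal (integral_nonneg fun ω => Finset.sum_nonneg fun _ _ => toReal_nonneg)]

theorem eGain_eq_tradingGain_sub {ω : Ω} (h : totalMarginalCost m n γp γm a ω ≠ ∞) :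
    eGain m n Hmid HT γp γm a ω
      = tradingGain m n Hmid HT a ω - (totalMarginalCost m n γp γm a ω).toReal := by
  simp only [totalMarginalCost, marginalCost, ENNReal.sum_ne_top, Finset.mem_univ, forall_const,
    ENNReal.add_ne_top] at h
  simp only [totalMarginalCost, marginalCost]
  rw [ENNReal.toReal_sum fun t ht => ENNReal.sum_ne_top.2 fun i _ =>
    ENNReal.add_ne_top.2 (h t ht i), eGain, tradingGain, ← Finset.sum_sub_distrib]
  refine Finset.sum_congr rfl fun t ht => ?_
  rw [ENNReal.toReal_sum fun i _ => ENNReal.add_ne_top.2 (h t ht i)]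
  congr 1
  exact Finset.sum_congr rfl fun i _ => (ENNReal.toReal_add (h t ht i).1 (h t ht i).2).symm

theorem integral_eGain (ha : GenAdmissible P m n F c a)
    (hint : Integrable (tradingGain m n Hmid HT a) P)
    (hmeas : Measurable (totalMarginalCost m n γp γm a))
    (hle : ∀ ω, totalMarginalCost m n γp γm a ω ≤ totalCost m c a ω) :
    ∫ ω, eGain m n Hmid HT γp γm a ω ∂P
      = ∫ ω, tradingGain m n Hmid HT a ω ∂P
        - (∫⁻ ω, totalMarginalCost m n γp γm a ω ∂P).toReal := by
  have hfin : ∫⁻ ω, totalMarginalCost m n γp γm a ω ∂P ≠ ∞ :=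
    ne_top_of_le_ne_top (lintegral_totalCost_ne_top ha) (lintegral_mono hle)
  have hae : ∀ᵐ ω ∂P, totalMarginalCost m n γp γm a ω < ∞ := ae_lt_top hmeas hfin
  rw [integral_congr_ae (hae.mono fun ω h => eGain_eq_tradingGain_sub h.ne),
    integral_sub hint (integrable_toReal_of_lintegral_ne_top hmeas.aemeasurable hfin),
    integral_toReal hmeas.aemeasurable hae]

theorem totalCost_smul_div_le
    (hsub : ∀ t < m, ∀ ω, ∀ x : Fin n → ℝ, ∀ s : ℝ, 0 ≤ s → s ≤ 1 →
      c t ω (s • x) ≤ ENNReal.ofReal s * c t ω x)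
    {ε : ℝ} (hε : 0 < ε) (hε1 : ε ≤ 1) (ω : Ω) :
    totalCost m c (fun t ω => ε • a t ω) ω / ENNReal.ofReal ε ≤ totalCost m c a ω := by
  rw [totalCost, div_eq_mul_inv, Finset.sum_mul]
  exact Finset.sum_le_sum fun t ht =>
    apply_smul_div_le (hsub t (Finset.mem_range.1 ht) ω) _ hε hε1

theorem tendsto_totalCost_smul_div
    (hderiv : HasMarginalCosts m c γp γm)
    (a : ℕ → Ω → Fin n → ℝ) (ω : Ω) :
    Tendsto (fun ε : ℝ => totalCost m c (fun t ω => ε • a t ω) ω / ENNReal.ofReal ε)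
      (nhdsWithin 0 (Ioi 0)) (nhds (totalMarginalCost m n γp γm a ω)) := by
  simp only [totalCost, div_eq_mul_inv, Finset.sum_mul]
  exact tendsto_finsetSum _ fun t ht => hderiv t (Finset.mem_range.1 ht) ω (a t ω)

theorem totalMarginalCost_le_totalCost
    (hsub : ∀ t < m, ∀ ω, ∀ x : Fin n → ℝ, ∀ s : ℝ, 0 ≤ s → s ≤ 1 →
      c t ω (s • x) ≤ ENNReal.ofReal s * c t ω x)
    (hderiv : HasMarginalCosts m c γp γm)
    (ω : Ω) : totalMarginalCost m n γp γm a ω ≤ totalCost m c a ω :=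
  Finset.sum_le_sum fun t ht =>
    le_of_tendsto_apply_smul_div (hsub t (Finset.mem_range.1 ht) ω) _
      (hderiv t (Finset.mem_range.1 ht) ω _)

theorem measurable_totalCost
    (hc_meas : ∀ t < m, Measurable (fun q : Ω × (Fin n → ℝ) => c t q.1 q.2))
    (haM : ∀ t < m, Measurable (a t)) : Measurable (totalCost m c a) :=
  Finset.measurable_sum _ fun t ht =>
    (hc_meas t (Finset.mem_range.1 ht)).comp (measurable_id.prodMk (haM t (Finset.mem_range.1 ht)))

theorem measurable_totalMarginalCost
    (hc_meas : ∀ t < m, Measurable (fun q : Ω × (Fin n → ℝ) => c t q.1 q.2))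
    (hderiv : HasMarginalCosts m c γp γm)
    (haM : ∀ t < m, Measurable (a t)) : Measurable (totalMarginalCost m n γp γm a) :=
  measurable_of_tendsto_metrizable' (nhdsWithin (0 : ℝ) (Ioi 0))
    (fun ε => (measurable_totalCost hc_meas fun t ht => (haM t ht).const_smul ε).div_const _)
    (tendsto_pi_nhds.2 (tendsto_totalCost_smul_div hderiv a))

theorem integral_genGain_le_integral_eGain (hF_le : ∀ t, F t ≤ mΩ)
    (hc_meas : ∀ t < m, Measurable (fun q : Ω × (Fin n → ℝ) => c t q.1 q.2))
    (hsub : ∀ t < m, ∀ ω, ∀ x : Fin n → ℝ, ∀ s : ℝ, 0 ≤ s → s ≤ 1 →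
      c t ω (s • x) ≤ ENNReal.ofReal s * c t ω x)
    (hderiv : HasMarginalCosts m c γp γm) (ha : GenAdmissible P m n F c a)
    (hint : Integrable (tradingGain m n Hmid HT a) P) :
    ∫ ω, genGain m n Hmid HT c a ω ∂P ≤ ∫ ω, eGain m n Hmid HT γp γm a ω ∂P := by
  have hle := totalMarginalCost_le_totalCost hsub hderiv (a := a)
  rw [integral_genGain ha hint,
    integral_eGain ha hint
      (measurable_totalMarginalCost hc_meas hderiv fun t => ha.1.measurable hF_le) hle]
  exact sub_le_sub_left (ENNReal.toReal_mono (lintegral_totalCost_ne_top ha) (lintegral_mono hle)) _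

theorem tendsto_lintegral_totalCost_smul_div (hF_le : ∀ t, F t ≤ mΩ)
    (hc_meas : ∀ t < m, Measurable (fun q : Ω × (Fin n → ℝ) => c t q.1 q.2))
    (hsub : ∀ t < m, ∀ ω, ∀ x : Fin n → ℝ, ∀ s : ℝ, 0 ≤ s → s ≤ 1 →
      c t ω (s • x) ≤ ENNReal.ofReal s * c t ω x)
    (hderiv : HasMarginalCosts m c γp γm) (ha : GenAdmissible P m n F c a) :
    Tendsto (fun ε : ℝ => (∫⁻ ω, totalCost m c (fun t ω => ε • a t ω) ω ∂P) / ENNReal.ofReal ε)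
      (nhdsWithin 0 (Ioi 0)) (nhds (∫⁻ ω, totalMarginalCost m n γp γm a ω ∂P)) := by
  refine (tendsto_lintegral_filter_of_dominated_convergence (totalCost m c a)
    (.of_forall fun ε => (measurable_totalCost hc_meas fun t ht =>
      (ha.1.measurable hF_le ht).const_smul ε).div_const _)
    ?_ (lintegral_totalCost_ne_top ha)
    (ae_of_all _ (tendsto_totalCost_smul_div hderiv a))).congr' ?_
  · filter_upwards [Ioc_mem_nhdsGT one_pos] with ε hε
    exact ae_of_all _ (totalCost_smul_div_le hsub hε.1 hε.2)
  · filter_upwards [self_mem_nhdsWithin] with ε (hε : 0 < ε)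
    simp only [div_eq_mul_inv]
    exact lintegral_mul_const' _ _ (ENNReal.inv_ne_top.2 (by simpa using hε))

theorem integral_genGain_smul {ε : ℝ} (hε : 0 < ε)
    (ha : GenAdmissible P m n F c (fun t ω => ε • a t ω))
    (hint : Integrable (tradingGain m n Hmid HT (fun t ω => ε • a t ω)) P) :
    ∫ ω, genGain m n Hmid HT c (fun t ω => ε • a t ω) ω ∂P
      = ε * (∫ ω, tradingGain m n Hmid HT a ω ∂P
        - ((∫⁻ ω, totalCost m c (fun t ω => ε • a t ω) ω ∂P) / ENNReal.ofReal ε).toReal) := by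
  simp only [integral_genGain ha hint, tradingGain_smul, integral_const_mul, ENNReal.toReal_div,
    toReal_ofReal hε.le]
  rw [mul_sub, mul_div_cancel₀ _ hε.ne']

theorem exists_integral_genGain_pos (hF_le : ∀ t, F t ≤ mΩ)
    (hc_meas : ∀ t < m, Measurable (fun q : Ω × (Fin n → ℝ) => c t q.1 q.2))
    (hsub : ∀ t < m, ∀ ω, ∀ x : Fin n → ℝ, ∀ s : ℝ, 0 ≤ s → s ≤ 1 →
      c t ω (s • x) ≤ ENNReal.ofReal s * c t ω x)
    (hderiv : HasMarginalCosts m c γp γm)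
    (hscale : ∀ a, GenAdmissible P m n F c a → ∀ s : ℝ, 0 ≤ s → s ≤ 1 →
      GenAdmissible P m n F c (fun t ω => s • a t ω))
    (hint : ∀ a, GenAdmissible P m n F c a → Integrable (tradingGain m n Hmid HT a) P)
    (ha : GenAdmissible P m n F c a) (hpos : 0 < ∫ ω, eGain m n Hmid HT γp γm a ω ∂P) :
    ∃ b, GenAdmissible P m n F c b ∧ 0 < ∫ ω, genGain m n Hmid HT c b ω ∂P := by
  have hle := totalMarginalCost_le_totalCost hsub hderiv (a := a)
  have hfin : ∫⁻ ω, totalMarginalCost m n γp γm a ω ∂P ≠ ∞ :=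
    ne_top_of_le_ne_top (lintegral_totalCost_ne_top ha) (lintegral_mono hle)
  have hgain : Tendsto (fun ε : ℝ => ∫ ω, tradingGain m n Hmid HT a ω ∂P
        - ((∫⁻ ω, totalCost m c (fun t ω => ε • a t ω) ω ∂P) / ENNReal.ofReal ε).toReal)
      (nhdsWithin 0 (Ioi 0)) (nhds (∫ ω, eGain m n Hmid HT γp γm a ω ∂P)) := by
    rw [integral_eGain ha (hint a ha)
      (measurable_totalMarginalCost hc_meas hderiv fun t => ha.1.measurable hF_le) hle]
    exact tendsto_const_nhds.sub ((ENNReal.tendsto_toReal hfin).comp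
      (tendsto_lintegral_totalCost_smul_div hF_le hc_meas hsub hderiv ha))
  obtain ⟨ε, hε, hε0, hε1⟩ :=
    ((hgain.eventually (lt_mem_nhds hpos)).and (Ioc_mem_nhdsGT one_pos)).exists
  have hb := hscale a ha ε hε0.le hε1
  refine ⟨_, hb, ?_⟩
  rw [integral_genGain_smul hε0 hb (hint _ hb)]
  exact mul_pos hε0 hε

theorem genAdmissible_zero (hc_zero : ∀ t < m, ∀ ω, c t ω 0 = 0) :
    GenAdmissible P m n F c (fun _ _ => 0) := by
  have hcost : ∀ ω, ∑ t ∈ Finset.range m, (c t ω 0).toReal = 0 := fun ω =>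
    Finset.sum_eq_zero fun t ht => by simp [hc_zero t (Finset.mem_range.1 ht)]
  refine ⟨fun t _ => ⟨measurable_const, 0, ae_of_all _ fun _ _ => by simp⟩,
    fun t ht => ae_of_all _ fun ω => by simp [hc_zero t ht], ?_⟩
  simp only [hcost]
  exact integrable_zero _ _ _

theorem genGain_zero (hc_zero : ∀ t < m, ∀ ω, c t ω 0 = 0) (ω : Ω) :
    genGain m n Hmid HT c (fun _ _ => 0) ω = 0 :=
  Finset.sum_eq_zero fun t ht => by simp [hc_zero t (Finset.mem_range.1 ht)]

end Market

theorem stmt_7_general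
    {mΩ : MeasurableSpace Ω} (P : Measure Ω) [IsProbabilityMeasure P]
    (m n : ℕ) (F : ℕ → MeasurableSpace Ω) (hF_le : ∀ t, F t ≤ mΩ)
    (Hmid HT : ℕ → Ω → Fin n → ℝ)
    (hHmid_meas : ∀ t < m, Measurable[F t] (Hmid t))
    (hHT_meas : ∀ t < m, Measurable[F m] (HT t))
    (hHmid_bdd : ∀ t < m, ∃ C : ℝ, ∀ᵐ ω ∂P, ∀ i, |Hmid t ω i| ≤ C)
    (hHT_bdd : ∀ t < m, ∃ C : ℝ, ∀ᵐ ω ∂P, ∀ i, |HT t ω i| ≤ C)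
    (c : ℕ → Ω → (Fin n → ℝ) → ℝ≥0∞)
    (hc_meas : ∀ t < m, Measurable (fun q : Ω × (Fin n → ℝ) => c t q.1 q.2))
    (hc_convex : ∀ t < m, ∀ ω, ∀ x y : Fin n → ℝ, ∀ s : ℝ, 0 ≤ s → s ≤ 1 →
      c t ω (s • x + (1 - s) • y) ≤ ENNReal.ofReal s * c t ω x + ENNReal.ofReal (1 - s) * c t ω y)
    (hc_zero : ∀ t < m, ∀ ω, c t ω 0 = 0)
    (γp γm : ℕ → Ω → Fin n → ℝ≥0∞)
    (hderiv : ∀ t < m, ∀ ω, ∀ x : Fin n → ℝ,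
      Tendsto (fun ε : ℝ => c t ω (ε • x) / ENNReal.ofReal ε) (nhdsWithin 0 (Set.Ioi 0))
        (nhds (∑ i, (γp t ω i * ENNReal.ofReal (max (x i) 0)
          + γm t ω i * ENNReal.ofReal (max (-x i) 0)))))
    (hscale : ∀ a, GenAdmissible P m n F c a → ∀ s : ℝ, 0 ≤ s → s ≤ 1 →
      GenAdmissible P m n F c (fun t ω => s • a t ω)) :
    (⨆ a : {a : ℕ → Ω → Fin n → ℝ // GenAdmissible P m n F c a},
        ((∫ ω, eGain m n Hmid HT γp γm a.1 ω ∂P : ℝ) : EReal)) = 0 ↔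
      (⨆ a : {a : ℕ → Ω → Fin n → ℝ // GenAdmissible P m n F c a},
        ((∫ ω, genGain m n Hmid HT c a.1 ω ∂P : ℝ) : EReal)) = 0 := by
  have hsub := fun t ht ω => apply_smul_le_of_convex (hc_convex t ht ω) (hc_zero t ht ω)
  have hint : ∀ a, GenAdmissible P m n F c a → Integrable (tradingGain m n Hmid HT a) P :=
    fun _ ha => integrable_tradingGain hF_le hHmid_meas hHT_meas hHmid_bdd hHT_bdd ha.1
  have h0 : GenAdmissible P m n F c (fun _ _ => 0) := genAdmissible_zero hc_zero
  rw [EReal.iSup_coe_eq_zero_iff ⟨⟨_, h0⟩, by simp [eGain]⟩,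
    EReal.iSup_coe_eq_zero_iff ⟨⟨_, h0⟩, by simp [genGain_zero hc_zero]⟩]
  refine ⟨fun h a => ?_, fun h a => ?_⟩
  · exact (integral_genGain_le_integral_eGain hF_le hc_meas hsub hderiv a.2 (hint _ a.2)).trans
      (h a)
  · by_contra! hpos
    obtain ⟨b, hb, hbpos⟩ :=
      exists_integral_genGain_pos hF_le hc_meas hsub hderiv hscale hint a.2 hpos
    exact (h ⟨b, hb⟩).not_gt hbpos

/-- If the generalized costs have marginal (proportional) costs
`γ_t^±` in the sense that `c_t(εa)/ε → γ_t^+·a^+ + γ_t^-·a^-` as `ε ↓ 0`, then the market has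
no statistical arbitrage for the linearized gains `G̃` iff it has none for the gains `G`:
`sup_a E[G̃(a)] = 0 ↔ sup_a E[G(a)] = 0`. -/
theorem stmt_7
    {mΩ : MeasurableSpace Ω} (P : Measure Ω) [IsProbabilityMeasure P]
    (m n : ℕ) (F : ℕ → MeasurableSpace Ω) (hF_mono : Monotone F) (hF_le : ∀ t, F t ≤ mΩ)
    (Hmid HT : ℕ → Ω → Fin n → ℝ)
    (hHmid_meas : ∀ t < m, Measurable[F t] (Hmid t))
    (hHT_meas : ∀ t < m, Measurable[F m] (HT t))
    (hHmid_bdd : ∀ t < m, ∃ C : ℝ, ∀ᵐ ω ∂P, ∀ i, |Hmid t ω i| ≤ C)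
    (hHT_bdd : ∀ t < m, ∃ C : ℝ, ∀ᵐ ω ∂P, ∀ i, |HT t ω i| ≤ C)
    (c : ℕ → Ω → (Fin n → ℝ) → ℝ≥0∞)
    (hc_meas : ∀ t < m, Measurable (fun q : Ω × (Fin n → ℝ) => c t q.1 q.2))
    (hc_adapted : ∀ t < m, ∀ x, Measurable[F t] (fun ω => c t ω x))
    (hc_convex : ∀ t < m, ∀ ω, ∀ x y : Fin n → ℝ, ∀ s : ℝ, 0 ≤ s → s ≤ 1 →
      c t ω (s • x + (1 - s) • y) ≤ ENNReal.ofReal s * c t ω x + ENNReal.ofReal (1 - s) * c t ω y)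
    (hc_zero : ∀ t < m, ∀ ω, c t ω 0 = 0)
    (γp γm : ℕ → Ω → Fin n → ℝ≥0∞)
    (hγp_meas : ∀ t < m, Measurable[F t] (γp t)) (hγm_meas : ∀ t < m, Measurable[F t] (γm t))
    (hderiv : ∀ t < m, ∀ ω, ∀ x : Fin n → ℝ,
      Tendsto (fun ε : ℝ => c t ω (ε • x) / ENNReal.ofReal ε) (nhdsWithin 0 (Set.Ioi 0))
        (nhds (∑ i, (γp t ω i * ENNReal.ofReal (max (x i) 0)
          + γm t ω i * ENNReal.ofReal (max (-x i) 0)))))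
    (hscale : ∀ a, GenAdmissible P m n F c a → ∀ s : ℝ, 0 ≤ s → s ≤ 1 →
      GenAdmissible P m n F c (fun t ω => s • a t ω)) :
    (⨆ a : {a : ℕ → Ω → Fin n → ℝ // GenAdmissible P m n F c a},
        ((∫ ω, eGain m n Hmid HT γp γm a.1 ω ∂P : ℝ) : EReal)) = 0 ↔
      (⨆ a : {a : ℕ → Ω → Fin n → ℝ // GenAdmissible P m n F c a},
        ((∫ ω, genGain m n Hmid HT c a.1 ω ∂P : ℝ) : EReal)) = 0 :=
  stmt_7_general P m n F hF_le Hmid HT hHmid_meas hHT_meas hHmid_bdd hHT_bdd c hc_meas hc_convex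
    hc_zero γp γm hderiv hscale
end
end

section
/- Let Q* be a probability measure under which the market with proportional costs is free from statistical arbitrage in the sense that E_{Q*}[G(a)] ≤ 0 for every admissible policy a. Let c'_t be generalized cost functions with c'_t(x) ≥ γ_t^+·x^+ + γ_t^−·x^− for all x ∈ ℝ^n, and for an admissible policy a let G'(a) := Σ_{t<m} [ a_t·(H_T^{(t)} − H_t^{(t)}) − c'_t(a_t) ] denote the gain under the higher costs. Then for every admissible policy a with E_{Q*}[Σ_{t<m} ( c'_t(a_t) − γ_t^+·a_t^+ − γ_t^−·a_t^− )] > 0 one has E_{Q*}[G'(a)] < 0 and consequently U^{Q*}_λ(G'(a)) < 0 for every λ ∈ (0,∞), whereas the zero policy attains U^{Q*}_λ(G'(0)) = 0; hence the zero policy is the unique optimal policy at all risk aversion levels. -/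
open MeasureTheory ENNReal Real Filter Set

noncomputable section

variable {Ω : Type*}

/-- Terminal gain of a policy under real-valued generalized transaction costs `c`. -/
def genGainR (m n : ℕ) (Hmid HT : ℕ → Ω → Fin n → ℝ) (c : ℕ → Ω → (Fin n → ℝ) → ℝ)
    (a : ℕ → Ω → Fin n → ℝ) (ω : Ω) : ℝ :=
  ∑ t ∈ Finset.range m, ((∑ i, a t ω i * (HT t ω i - Hmid t ω i)) - c t ω (a t ω))

/-- If the market with proportional costs is free from statistical arbitrage
under `Q*` (`E_{Q*}[G(a)] ≤ 0` for all admissible `a`), then for any higher (normalized) costs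
`c' ≥ γ^+·x^+ + γ^-·x^-`, every policy whose extra cost has strictly positive `Q*`-expectation
has `E_{Q*}[G'(a)] < 0`, hence `U^{Q*}_λ(G'(a)) < 0` for every `λ ∈ (0,∞)`, while the zero
policy attains `U^{Q*}_λ(G'(0)) = 0`: the zero policy is the unique optimum. -/
theorem stmt_9
    {mΩ : MeasurableSpace Ω} (P : Measure Ω) [IsProbabilityMeasure P]
    (m n : ℕ) (F : ℕ → MeasurableSpace Ω) (hF_mono : Monotone F) (hF_le : ∀ t, F t ≤ mΩ)
    (Hmid HT : ℕ → Ω → Fin n → ℝ)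
    (hHmid_meas : ∀ t < m, Measurable[F t] (Hmid t))
    (hHT_meas : ∀ t < m, Measurable[F m] (HT t))
    (hHmid_bdd : ∀ t < m, ∃ C : ℝ, ∀ᵐ ω ∂P, ∀ i, |Hmid t ω i| ≤ C)
    (hHT_bdd : ∀ t < m, ∃ C : ℝ, ∀ᵐ ω ∂P, ∀ i, |HT t ω i| ≤ C)
    (γp γm : ℕ → Ω → Fin n → ℝ)
    (hγp_meas : ∀ t < m, Measurable[F t] (γp t)) (hγm_meas : ∀ t < m, Measurable[F t] (γm t))
    (hγp_nonneg : ∀ t ω i, 0 ≤ γp t ω i) (hγm_nonneg : ∀ t ω i, 0 ≤ γm t ω i)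
    (Qstar : Measure Ω) [IsProbabilityMeasure Qstar]
    (hIntQ : ∀ a, IsPolicy P m n F a → Integrable (propGain m n Hmid HT γp γm a) Qstar)
    (hNSA : ∀ a, IsPolicy P m n F a → (∫ ω, propGain m n Hmid HT γp γm a ω ∂Qstar) ≤ 0)
    (c' : ℕ → Ω → (Fin n → ℝ) → ℝ)
    (hc'_ge : ∀ t < m, ∀ ω, ∀ x : Fin n → ℝ,
      (∑ i, (γp t ω i * max (x i) 0 + γm t ω i * max (-x i) 0)) ≤ c' t ω x)
    (hc'_zero : ∀ t < m, ∀ ω, c' t ω 0 = 0) :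
    (∀ a, IsPolicy P m n F a →
      Integrable (fun ω => ∑ t ∈ Finset.range m, c' t ω (a t ω)) Qstar →
      0 < (∫ ω, ∑ t ∈ Finset.range m, (c' t ω (a t ω)
            - ∑ i, (γp t ω i * max (a t ω i) 0 + γm t ω i * max (-a t ω i) 0)) ∂Qstar) →
      (∫ ω, genGainR m n Hmid HT c' a ω ∂Qstar) < 0 ∧
        ∀ l : ℝ, 0 < l → entU Qstar l (genGainR m n Hmid HT c' a) < 0) ∧
      (∀ l : ℝ, 0 < l → entU Qstar l (genGainR m n Hmid HT c' (fun _ _ _ => 0)) = 0) := by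
  classical
  constructor
  · intro a ha hInt hpos
    set extra : Ω → ℝ := fun ω => ∑ t ∈ Finset.range m, (c' t ω (a t ω)
            - ∑ i, (γp t ω i * max (a t ω i) 0 + γm t ω i * max (-a t ω i) 0)) with hextra_def
    have hextraInt : Integrable extra Qstar := by
      by_contra h
      rw [integral_undef h] at hpos
      exact lt_irrefl 0 hpos
    have hEq : genGainR m n Hmid HT c' a
        = fun ω => propGain m n Hmid HT γp γm a ω - extra ω := by
      funext ω
      rw [hextra_def]
      unfold genGainR propGain
      rw [← Finset.sum_sub_distrib]
      exact Finset.sum_congr rfl fun t _ => by ring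
    have hXint : Integrable (genGainR m n Hmid HT c' a) Qstar := by
      rw [hEq]; exact (hIntQ a ha).sub hextraInt
    have hXneg : (∫ ω, genGainR m n Hmid HT c' a ω ∂Qstar) < 0 := by
      have h1 := hNSA a ha
      have h2 : (∫ ω, genGainR m n Hmid HT c' a ω ∂Qstar)
          = (∫ ω, propGain m n Hmid HT γp γm a ω ∂Qstar) - ∫ ω, extra ω ∂Qstar := by
        simp only [hEq]
        exact integral_sub (hIntQ a ha) hextraInt
      rw [h2]; linarith
    refine ⟨hXneg, fun l hl => ?_⟩
    set X : Ω → ℝ := genGainR m n Hmid HT c' a with hXdef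
    set g : Ω → ℝ := fun ω => -l * X ω + 1 with hg_def
    have hgInt : Integrable g Qstar := (hXint.const_mul (-l)).add (integrable_const 1)
    have hgplusInt : Integrable (fun ω => max (g ω) 0) Qstar := hgInt.pos_part
    have key : ENNReal.ofReal (∫ ω, g ω ∂Qstar)
        ≤ ∫⁻ ω, ENNReal.ofReal (Real.exp (-l * X ω)) ∂Qstar := by
      calc ENNReal.ofReal (∫ ω, g ω ∂Qstar)
          ≤ ENNReal.ofReal (∫ ω, max (g ω) 0 ∂Qstar) := by
            apply ENNReal.ofReal_le_ofReal
            exact integral_mono hgInt hgplusInt fun ω => le_max_left _ _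
        _ = ∫⁻ ω, ENNReal.ofReal (max (g ω) 0) ∂Qstar :=
            ofReal_integral_eq_lintegral_ofReal hgplusInt
              (Filter.Eventually.of_forall fun ω => le_max_right _ _)
        _ ≤ ∫⁻ ω, ENNReal.ofReal (Real.exp (-l * X ω)) ∂Qstar := by
            apply lintegral_mono
            intro ω
            apply ENNReal.ofReal_le_ofReal
            apply max_le
            · simpa [hg_def, add_comm] using Real.add_one_le_exp (-l * X ω)
            · positivity
    have hginteg : (∫ ω, g ω ∂Qstar) = -l * (∫ ω, X ω ∂Qstar) + 1 := by
      rw [hg_def]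
      rw [integral_add (hXint.const_mul (-l)) (integrable_const 1)]
      simp [integral_neg, MeasureTheory.integral_const_mul]
    have h1lt : (1 : ℝ≥0∞) < ∫⁻ ω, ENNReal.ofReal (Real.exp (-l * X ω)) ∂Qstar := by
      refine lt_of_lt_of_le ?_ key
      rw [show (1 : ℝ≥0∞) = ENNReal.ofReal 1 by simp]
      rw [ENNReal.ofReal_lt_ofReal_iff_of_nonneg (by norm_num)]
      rw [hginteg]
      nlinarith [hXneg]
    have hlogpos : (0 : EReal) < ENNReal.log (∫⁻ ω, ENNReal.ofReal (Real.exp (-l * X ω)) ∂Qstar) :=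
      ENNReal.zero_lt_log_iff.mpr h1lt
    have hcoe : (0 : EReal) < ((1 / l : ℝ) : EReal) := by
      rw [show ((0 : EReal) = ((0:ℝ) : EReal)) by simp]
      exact_mod_cast (by positivity : (0:ℝ) < 1 / l)
    have := EReal.mul_pos hlogpos hcoe
    rw [entU, EReal.neg_mul, EReal.neg_lt_comm, neg_zero]
    exact this
  · intro l hl
    have h0 : ∀ ω, genGainR m n Hmid HT c' (fun _ _ _ => 0) ω = 0 := by
      intro ω
      apply Finset.sum_eq_zero
      intro t ht
      simp only [zero_mul, Finset.sum_const_zero, zero_sub, neg_eq_zero]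
      exact hc'_zero t (Finset.mem_range.mp ht) ω
    rw [entU]
    simp only [h0, mul_zero, Real.exp_zero, ENNReal.ofReal_one, lintegral_one,
      measure_univ, mul_one, ENNReal.log_one, neg_zero]
    exact EReal.zero_mul _
end
end

section
/- Assume transaction costs are zero, so G(a) = Σ_{t<m} a_t·(H_T^{(t)} − H_t^{(t)}) and all policies are admissible. Let a* be a policy minimizing E_P[exp(−G(a))] over all policies, with 0 < E_P[exp(−G(a*))] < ∞, and define Q* by dQ*/dP = exp(−G(a*)) / E_P[exp(−G(a*))]. Then Q* is the minimal entropy martingale measure: for every probability measure Q equivalent to P satisfying the martingale condition E_Q[H_T^{(t,i)} | 𝓕_t] = H_t^{(t,i)} for all t < m and all i, the relative entropy satisfies H(Q* | P) ≤ H(Q | P). -/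
/-!
Let `G` be the gain of `a*`; it is bounded, so `Q*` is the exponential tilt `P.tilted (-G)` and
`c ↦ E_P[exp (c G)]` is differentiable. Minimality of `a*` among the rescaled policies `c • a*`
makes `c = -1` a critical point, i.e. `E_{Q*}[G] = 0`, whence `H(Q* | P) = -log E_P[exp (-G)]`.
For an equivalent martingale measure `Q` the tower property gives `E_Q[G] = 0`, and the
Donsker–Varadhan inequality `E_Q[-G] - log E_P[exp (-G)] ≤ H(Q | P)` finishes the proof.
-/

open MeasureTheory ENNReal Real Filter Set

noncomputable section

variable {Ω : Type*}

open Classical in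
/-- Relative entropy `H(Q | P) = E_Q[log (dQ/dP)]`, valued in `EReal` (it equals `+∞`
when the logarithm of the density is not `Q`-integrable). -/
def relEnt {mΩ : MeasurableSpace Ω} (Q P : Measure Ω) : EReal :=
  if Integrable (fun ω => Real.log (Q.rnDeriv P ω).toReal) Q then
    ((∫ ω, Real.log (Q.rnDeriv P ω).toReal ∂Q : ℝ) : EReal)
  else ⊤

open ProbabilityTheory InformationTheory

section

variable {mΩ : MeasurableSpace Ω} {μ ν : Measure Ω}

section Entropy

lemma relEnt_of_integrable (h : Integrable (llr μ ν) μ) :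
    relEnt μ ν = ((∫ ω, llr μ ν ω ∂μ : ℝ) : EReal) :=
  if_pos h

lemma relEnt_of_not_integrable (h : ¬ Integrable (llr μ ν) μ) : relEnt μ ν = ⊤ :=
  if_neg h

variable {f : Ω → ℝ}

lemma relEnt_tilted_self [IsProbabilityMeasure μ] (hfμ : Integrable (fun ω ↦ exp (f ω)) μ)
    (hf : Integrable f (μ.tilted f)) :
    relEnt (μ.tilted f) μ =
      ((∫ ω, f ω ∂μ.tilted f - Real.log (∫ ω, exp (f ω) ∂μ) : ℝ) : EReal) := by
  have : IsProbabilityMeasure (μ.tilted f) := isProbabilityMeasure_tilted hfμ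
  have hllr : llr (μ.tilted f) μ =ᵐ[μ.tilted f] fun ω ↦ f ω - Real.log (∫ ω, exp (f ω) ∂μ) :=
    (tilted_absolutelyContinuous μ f).ae_le (log_rnDeriv_tilted_left_self hfμ)
  have hint : Integrable (llr (μ.tilted f) μ) (μ.tilted f) :=
    (hf.sub (integrable_const _)).congr hllr.symm
  rw [relEnt_of_integrable hint, integral_congr_ae hllr, integral_sub hf (integrable_const _),
    integral_const, probReal_univ, one_smul]

/-- Donsker–Varadhan: Gibbs' inequality for `μ` against the tilted measure `ν.tilted f`. -/
lemma integral_sub_log_integral_exp_le_relEnt [IsProbabilityMeasure μ] [IsProbabilityMeasure ν]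
    (hμν : μ ≪ ν) (hfμ : Integrable f μ) (hfν : Integrable (fun ω ↦ exp (f ω)) ν) :
    ((∫ ω, f ω ∂μ - Real.log (∫ ω, exp (f ω) ∂ν) : ℝ) : EReal) ≤ relEnt μ ν := by
  by_cases h_int : Integrable (llr μ ν) μ
  · rw [relEnt_of_integrable h_int]
    have : IsProbabilityMeasure (ν.tilted f) := isProbabilityMeasure_tilted hfν
    have h_gibbs := integral_llr_add_sub_measure_univ_nonneg
      (hμν.trans (absolutelyContinuous_tilted hfν)) (integrable_llr_tilted_right hμν hfμ h_int hfν)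
    rw [integral_llr_tilted_right hμν hfμ hfν h_int] at h_gibbs
    simp only [probReal_univ] at h_gibbs
    exact EReal.coe_le_coe_iff.mpr (by linarith)
  · rw [relEnt_of_not_integrable h_int]
    exact le_top

end Entropy

lemma integral_tilted_mul_self_eq_zero_of_isLocalMin [IsProbabilityMeasure μ] {X : Ω → ℝ} {t : ℝ}
    (ht : t ∈ interior (integrableExpSet X μ)) (hmin : IsLocalMin (mgf X μ) t) :
    (μ.tilted (t * X ·))[X] = 0 := by
  rw [integral_tilted_mul_self ht]
  refine IsLocalMin.deriv_eq_zero ?_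
  filter_upwards [hmin, isOpen_interior.mem_nhds ht] with s hs _
  exact Real.log_le_log (mgf_pos (integrable_of_mem_integrableExpSet (interior_subset ht))) hs

lemma MeasureTheory.MemLp.integrable_exp [IsFiniteMeasure μ] {f : Ω → ℝ} (hf : MemLp f ∞ μ) :
    Integrable (fun ω ↦ exp (f ω)) μ := by
  refine Integrable.of_bound (Real.continuous_exp.comp_aestronglyMeasurable hf.1)
    (exp (eLpNorm f ∞ μ).toReal) ?_
  filter_upwards [ae_le_eLpNormEssSup (f := f)] with ω hω
  rw [Real.norm_of_nonneg (exp_pos _).le, exp_le_exp]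
  refine (le_abs_self _).trans ?_
  rw [← Real.norm_eq_abs, ← toReal_enorm]
  exact ENNReal.toReal_mono hf.2.ne (by simpa using hω)

lemma withDensity_ofReal_exp_div_lintegral [NeZero μ] {f : Ω → ℝ}
    (hf : Integrable (fun ω ↦ exp (f ω)) μ) :
    μ.withDensity (fun ω ↦ ENNReal.ofReal (exp (f ω)) / ∫⁻ ω', ENNReal.ofReal (exp (f ω')) ∂μ)
      = μ.tilted f := by
  rw [← ofReal_integral_eq_lintegral_ofReal hf (ae_of_all _ fun _ ↦ (exp_pos _).le)]
  simp_rw [← ENNReal.ofReal_div_of_pos (integral_exp_pos hf)]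
  rfl

lemma mgf_neg_one_le_of_lintegral_le {X : Ω → ℝ} {s : ℝ} (hX : AEMeasurable X μ)
    (hs : Integrable (fun ω ↦ exp (s * X ω)) μ)
    (h : ∫⁻ ω, ENNReal.ofReal (exp (-X ω)) ∂μ ≤ ∫⁻ ω, ENNReal.ofReal (exp (s * X ω)) ∂μ) :
    mgf X μ (-1) ≤ mgf X μ s := by
  simp only [mgf, neg_one_mul]
  rw [integral_eq_lintegral_of_nonneg_ae (ae_of_all _ fun _ ↦ (exp_pos _).le)
      (hX.neg.exp (f := fun ω ↦ -X ω)).aestronglyMeasurable,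
    integral_eq_lintegral_of_nonneg_ae (ae_of_all _ fun _ ↦ (exp_pos _).le) hs.1]
  exact ENNReal.toReal_mono hs.lintegral_lt_top.ne h

lemma integral_mul_eq_integral_mul_of_condExp_eq {m m₀ : MeasurableSpace Ω} {μ : Measure[m₀] Ω}
    [IsFiniteMeasure μ] (hm : m ≤ m₀) {a X Y : Ω → ℝ} (ha : StronglyMeasurable[m] a)
    (hX : Integrable X μ) (haX : Integrable (fun ω ↦ a ω * X ω) μ) (hXY : μ[X|m] =ᵐ[μ] Y) :
    ∫ ω, a ω * X ω ∂μ = ∫ ω, a ω * Y ω ∂μ := by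
  rw [← integral_condExp hm]
  refine integral_congr_ae ?_
  filter_upwards [condExp_mul_of_stronglyMeasurable_left ha haX hX, hXY] with ω h1 h2
  exact h1.trans (by rw [Pi.mul_apply, h2])

section Market

variable {P : Measure Ω} {m n : ℕ} {F : ℕ → MeasurableSpace Ω} {Hmid HT a : ℕ → Ω → Fin n → ℝ}

lemma IsPolicy.const_mul (ha : IsPolicy P m n F a) (c : ℝ) :
    IsPolicy P m n F (fun t ω i ↦ c * a t ω i) := by
  intro t ht
  obtain ⟨ha_meas, C, hC⟩ := ha t ht
  refine ⟨measurable_const.mul ha_meas, |c| * C, ?_⟩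
  filter_upwards [hC] with ω hω i
  rw [abs_mul]
  exact mul_le_mul_of_nonneg_left (hω i) (abs_nonneg c)

lemma linGain_const_mul (c : ℝ) (ω : Ω) :
    linGain m n Hmid HT (fun t ω i ↦ c * a t ω i) ω = c * linGain m n Hmid HT a ω := by
  simp only [linGain, Finset.mul_sum, mul_assoc]

lemma memLp_top_apply_of_ae_bound (hνP : ν ≪ P) {f : ℕ → Ω → Fin n → ℝ}
    (hf : ∀ t < m, Measurable (f t)) (hC : ∀ t < m, ∃ C : ℝ, ∀ᵐ ω ∂P, ∀ i, |f t ω i| ≤ C) :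
    ∀ t < m, ∀ i, MemLp (fun ω ↦ f t ω i) ∞ ν := by
  intro t ht i
  obtain ⟨C, hC⟩ := hC t ht
  exact memLp_top_of_bound ((measurable_pi_apply i).comp (hf t ht)).aestronglyMeasurable C
    (hνP.ae_le (hC.mono fun ω hω ↦ hω i))

lemma memLp_top_linGain (ha : ∀ t < m, ∀ i, MemLp (fun ω ↦ a t ω i) ∞ ν)
    (hHT : ∀ t < m, ∀ i, MemLp (fun ω ↦ HT t ω i) ∞ ν)
    (hHmid : ∀ t < m, ∀ i, MemLp (fun ω ↦ Hmid t ω i) ∞ ν) :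
    MemLp (linGain m n Hmid HT a) ∞ ν := by
  refine memLp_finsetSum _ fun t ht ↦ memLp_finsetSum _ fun i _ ↦ ?_
  have ht : t < m := Finset.mem_range.mp ht
  exact ((hHT t ht i).sub (hHmid t ht i)).mul (ha t ht i)

lemma integral_linGain_eq_zero {Q : Measure Ω} [IsFiniteMeasure Q] (hF_le : ∀ t, F t ≤ mΩ)
    (ha_meas : ∀ t < m, Measurable[F t] (a t))
    (ha : ∀ t < m, ∀ i, MemLp (fun ω ↦ a t ω i) ∞ Q)
    (hHT : ∀ t < m, ∀ i, MemLp (fun ω ↦ HT t ω i) ∞ Q)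
    (hHmid : ∀ t < m, ∀ i, MemLp (fun ω ↦ Hmid t ω i) ∞ Q)
    (hmart : ∀ t < m, ∀ i : Fin n, (Q[fun ω => HT t ω i | F t]) =ᵐ[Q] fun ω => Hmid t ω i) :
    ∫ ω, linGain m n Hmid HT a ω ∂Q = 0 := by
  have hint : ∀ X : ℕ → Ω → Fin n → ℝ, (∀ t < m, ∀ i, MemLp (fun ω ↦ X t ω i) ∞ Q) →
      ∀ t < m, ∀ i, Integrable (fun ω ↦ a t ω i * X t ω i) Q := fun X hX t ht i ↦
    ((hX t ht i).mul (ha t ht i)).integrable le_top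
  have hterm : ∀ t < m, ∀ i, ∫ ω, a t ω i * (HT t ω i - Hmid t ω i) ∂Q = 0 := by
    intro t ht i
    simp_rw [mul_sub]
    rw [integral_sub (hint HT hHT t ht i) (hint Hmid hHmid t ht i),
      integral_mul_eq_integral_mul_of_condExp_eq (hF_le t) (a := fun ω ↦ a t ω i)
        ((measurable_pi_apply i).comp (ha_meas t ht)).stronglyMeasurable
        ((hHT t ht i).integrable le_top) (hint HT hHT t ht i) (hmart t ht i), sub_self]
  have hint' : ∀ t < m, ∀ i, Integrable (fun ω ↦ a t ω i * (HT t ω i - Hmid t ω i)) Q :=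
    hint (fun t ω i ↦ HT t ω i - Hmid t ω i) fun t ht i ↦ (hHT t ht i).sub (hHmid t ht i)
  simp only [linGain]
  rw [integral_finsetSum _ fun t ht ↦
    integrable_finsetSum _ fun i _ ↦ hint' t (Finset.mem_range.mp ht) i]
  refine Finset.sum_eq_zero fun t ht ↦ ?_
  rw [integral_finsetSum _ fun i _ ↦ hint' t (Finset.mem_range.mp ht) i]
  exact Finset.sum_eq_zero fun i _ ↦ hterm t (Finset.mem_range.mp ht) i

end Market

end

theorem stmt_11_general
    {mΩ : MeasurableSpace Ω} (P : Measure Ω) [IsProbabilityMeasure P]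
    (m n : ℕ) (F : ℕ → MeasurableSpace Ω) (hF_le : ∀ t, F t ≤ mΩ)
    (Hmid HT : ℕ → Ω → Fin n → ℝ)
    (hHmid_meas : ∀ t < m, Measurable[F t] (Hmid t))
    (hHT_meas : ∀ t < m, Measurable[F m] (HT t))
    (hHmid_bdd : ∀ t < m, ∃ C : ℝ, ∀ᵐ ω ∂P, ∀ i, |Hmid t ω i| ≤ C)
    (hHT_bdd : ∀ t < m, ∃ C : ℝ, ∀ᵐ ω ∂P, ∀ i, |HT t ω i| ≤ C)
    (astar : ℕ → Ω → Fin n → ℝ) (hastar : IsPolicy P m n F astar)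
    (hmin : ∀ a, IsPolicy P m n F a →
      (∫⁻ ω, ENNReal.ofReal (Real.exp (-linGain m n Hmid HT astar ω)) ∂P) ≤
        ∫⁻ ω, ENNReal.ofReal (Real.exp (-linGain m n Hmid HT a ω)) ∂P) :
    let Qstar : Measure Ω := P.withDensity (fun ω =>
      ENNReal.ofReal (Real.exp (-linGain m n Hmid HT astar ω)) /
        ∫⁻ ω', ENNReal.ofReal (Real.exp (-linGain m n Hmid HT astar ω')) ∂P)
    ∀ Q : Measure Ω, IsProbabilityMeasure Q → Q ≪ P → P ≪ Q →
      (∀ t < m, ∀ i : Fin n, (Q[fun ω => HT t ω i | F t]) =ᵐ[Q] fun ω => Hmid t ω i) →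
      relEnt Qstar P ≤ relEnt Q P := by
  intro Qstar Q _ hQP _ hmart
  set G := linGain m n Hmid HT astar
  have hastar_meas t (ht : t < m) := (hastar t ht).1.mono (hF_le t) le_rfl
  have hastar_top {ν : Measure Ω} (hνP : ν ≪ P) :=
    memLp_top_apply_of_ae_bound hνP hastar_meas fun t ht ↦ (hastar t ht).2
  have hHT_top {ν : Measure Ω} (hνP : ν ≪ P) :=
    memLp_top_apply_of_ae_bound hνP (fun t ht ↦ (hHT_meas t ht).mono (hF_le m) le_rfl) hHT_bdd
  have hHmid_top {ν : Measure Ω} (hνP : ν ≪ P) :=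
    memLp_top_apply_of_ae_bound hνP (fun t ht ↦ (hHmid_meas t ht).mono (hF_le t) le_rfl) hHmid_bdd
  have hG {ν : Measure Ω} (hνP : ν ≪ P) : MemLp G ∞ ν :=
    memLp_top_linGain (hastar_top hνP) (hHT_top hνP) (hHmid_top hνP)
  have hexp (s : ℝ) : Integrable (fun ω ↦ exp (s * G ω)) P :=
    ((hG .rfl).const_mul s).integrable_exp
  have hQstar : Qstar = P.tilted (-1 * G ·) := by
    simp only [Qstar, neg_one_mul]
    exact withDensity_ofReal_exp_div_lintegral (by simpa using hexp (-1))
  have hmgf : IsLocalMin (mgf G P) (-1) := Eventually.of_forall fun s ↦ by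
    have h := hmin _ (hastar.const_mul (-s))
    simp_rw [linGain_const_mul, neg_mul, neg_neg] at h
    exact mgf_neg_one_le_of_lintegral_le (hG .rfl).1.aemeasurable (hexp s) h
  have hfoc : ∫ ω, G ω ∂P.tilted (-1 * G ·) = 0 :=
    integral_tilted_mul_self_eq_zero_of_isLocalMin (by simp [integrableExpSet, hexp]) hmgf
  have hQG : ∫ ω, G ω ∂Q = 0 := integral_linGain_eq_zero hF_le (fun t ht ↦ (hastar t ht).1)
    (hastar_top hQP) (hHT_top hQP) (hHmid_top hQP) hmart
  have : IsProbabilityMeasure (P.tilted (-1 * G ·)) := isProbabilityMeasure_tilted (hexp (-1))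
  rw [hQstar, relEnt_tilted_self (hexp (-1))
    (((hG (tilted_absolutelyContinuous P _)).integrable le_top).const_mul (-1))]
  calc _ = ((∫ ω, -1 * G ω ∂Q - Real.log (∫ ω, exp (-1 * G ω) ∂P) : ℝ) : EReal) := by
        rw [integral_const_mul, integral_const_mul, hfoc, hQG]
    _ ≤ relEnt Q P := integral_sub_log_integral_exp_le_relEnt hQP
        (((hG hQP).integrable le_top).const_mul (-1)) (hexp (-1))

/-- With zero transaction costs, the measure `Q*` with density
`exp(-G(a*))/E_P[exp(-G(a*))]`, where `a*` minimizes `E_P[exp(-G(a))]`, is the minimal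
entropy martingale measure: `H(Q* | P) ≤ H(Q | P)` for every equivalent martingale
measure `Q`. -/
theorem stmt_11
    {mΩ : MeasurableSpace Ω} (P : Measure Ω) [IsProbabilityMeasure P]
    (m n : ℕ) (F : ℕ → MeasurableSpace Ω) (hF_mono : Monotone F) (hF_le : ∀ t, F t ≤ mΩ)
    (Hmid HT : ℕ → Ω → Fin n → ℝ)
    (hHmid_meas : ∀ t < m, Measurable[F t] (Hmid t))
    (hHT_meas : ∀ t < m, Measurable[F m] (HT t))
    (hHmid_bdd : ∀ t < m, ∃ C : ℝ, ∀ᵐ ω ∂P, ∀ i, |Hmid t ω i| ≤ C)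
    (hHT_bdd : ∀ t < m, ∃ C : ℝ, ∀ᵐ ω ∂P, ∀ i, |HT t ω i| ≤ C)
    (astar : ℕ → Ω → Fin n → ℝ) (hastar : IsPolicy P m n F astar)
    (hmin : ∀ a, IsPolicy P m n F a →
      (∫⁻ ω, ENNReal.ofReal (Real.exp (-linGain m n Hmid HT astar ω)) ∂P) ≤
        ∫⁻ ω, ENNReal.ofReal (Real.exp (-linGain m n Hmid HT a ω)) ∂P)
    (hZpos : 0 < ∫⁻ ω, ENNReal.ofReal (Real.exp (-linGain m n Hmid HT astar ω)) ∂P)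
    (hZfin : (∫⁻ ω, ENNReal.ofReal (Real.exp (-linGain m n Hmid HT astar ω)) ∂P) ≠ ∞) :
    let Qstar : Measure Ω := P.withDensity (fun ω =>
      ENNReal.ofReal (Real.exp (-linGain m n Hmid HT astar ω)) /
        ∫⁻ ω', ENNReal.ofReal (Real.exp (-linGain m n Hmid HT astar ω')) ∂P)
    ∀ Q : Measure Ω, IsProbabilityMeasure Q → Q ≪ P → P ≪ Q →
      (∀ t < m, ∀ i : Fin n, (Q[fun ω => HT t ω i | F t]) =ᵐ[Q] fun ω => Hmid t ω i) →
      relEnt Qstar P ≤ relEnt Q P :=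
  stmt_11_general P m n F hF_le Hmid HT hHmid_meas hHT_meas hHmid_bdd hHT_bdd astar hastar hmin
end
end

section
/- Let a* be an admissible policy minimizing E_P[exp(−G(a))] over admissible policies, and let ã be an admissible policy with 0 < E_P[exp(−G(ã))] ≤ (1 + ε)·E_P[exp(−G(a*))] < ∞ for some ε > 0. Define the probability measure Q̃ by dQ̃/dP = exp(−G(ã)) / E_P[exp(−G(ã))] and let Ũ_λ denote the entropic utility under Q̃. Then for every λ ∈ (0,∞) and every admissible policy a, Ũ_λ(G(a)) ≤ (1/λ)·log(1 + ε). -/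
open MeasureTheory ENNReal Real Filter Set

noncomputable section

variable {Ω : Type*}

lemma propGain_superadd (m n : ℕ) (Hmid HT γp γm : ℕ → Ω → Fin n → ℝ)
    (hγp : ∀ t ω i, 0 ≤ γp t ω i) (hγm : ∀ t ω i, 0 ≤ γm t ω i)
    (a b : ℕ → Ω → Fin n → ℝ) (l : ℝ) (hl : 0 ≤ l) (ω : Ω) :
    l * propGain m n Hmid HT γp γm a ω + propGain m n Hmid HT γp γm b ω ≤
      propGain m n Hmid HT γp γm (fun t ω i => l * a t ω i + b t ω i) ω := by
  unfold propGain
  rw [Finset.mul_sum, ← Finset.sum_add_distrib]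
  refine Finset.sum_le_sum fun t _ => ?_
  have hlin : (∑ i, (l * a t ω i + b t ω i) * (HT t ω i - Hmid t ω i)) =
      l * (∑ i, a t ω i * (HT t ω i - Hmid t ω i)) +
        ∑ i, b t ω i * (HT t ω i - Hmid t ω i) := by
    rw [Finset.mul_sum, ← Finset.sum_add_distrib]; congr 1; ext i; ring
  have hcost : (∑ i, (γp t ω i * max (l * a t ω i + b t ω i) 0
        + γm t ω i * max (-(l * a t ω i + b t ω i)) 0)) ≤
      l * (∑ i, (γp t ω i * max (a t ω i) 0 + γm t ω i * max (-a t ω i) 0)) +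
        ∑ i, (γp t ω i * max (b t ω i) 0 + γm t ω i * max (-b t ω i) 0) := by
    rw [Finset.mul_sum, ← Finset.sum_add_distrib]
    refine Finset.sum_le_sum fun i _ => ?_
    have h1 : max (l * a t ω i + b t ω i) 0 ≤ l * max (a t ω i) 0 + max (b t ω i) 0 := by
      apply max_le
      · gcongr <;> [exact le_max_left _ _; exact le_max_left _ _]
      · positivity
    have h2 : max (-(l * a t ω i + b t ω i)) 0 ≤ l * max (-a t ω i) 0 + max (-b t ω i) 0 := by
      apply max_le
      · have : -(l * a t ω i + b t ω i) = l * (-a t ω i) + (-b t ω i) := by ring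
        rw [this]; gcongr <;> [exact le_max_left _ _; exact le_max_left _ _]
      · positivity
    have := mul_le_mul_of_nonneg_left h1 (hγp t ω i)
    have := mul_le_mul_of_nonneg_left h2 (hγm t ω i)
    nlinarith
  rw [hlin]; linarith

lemma propGain_meas {mΩ : MeasurableSpace Ω}
    (m n : ℕ) (F : ℕ → MeasurableSpace Ω) (hF_le : ∀ t, F t ≤ mΩ)
    (Hmid HT γp γm : ℕ → Ω → Fin n → ℝ)
    (hHmid_meas : ∀ t < m, Measurable[F t] (Hmid t))
    (hHT_meas : ∀ t < m, Measurable[F m] (HT t))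
    (hγp_meas : ∀ t < m, Measurable[F t] (γp t)) (hγm_meas : ∀ t < m, Measurable[F t] (γm t))
    (a : ℕ → Ω → Fin n → ℝ) (ha : ∀ t < m, Measurable[F t] (a t)) :
    Measurable (propGain m n Hmid HT γp γm a) := by
  unfold propGain
  refine Finset.measurable_sum _ fun t ht => ?_
  rw [Finset.mem_range] at ht
  have hA : Measurable (a t) := (ha t ht).mono (hF_le t) le_rfl
  have hM : Measurable (Hmid t) := (hHmid_meas t ht).mono (hF_le t) le_rfl
  have hT : Measurable (HT t) := (hHT_meas t ht).mono (hF_le m) le_rfl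
  have hP : Measurable (γp t) := (hγp_meas t ht).mono (hF_le t) le_rfl
  have hQ : Measurable (γm t) := (hγm_meas t ht).mono (hF_le t) le_rfl
  have hai : ∀ i, Measurable fun ω => a t ω i := fun i => (measurable_pi_apply i).comp hA
  have hMi : ∀ i, Measurable fun ω => Hmid t ω i := fun i => (measurable_pi_apply i).comp hM
  have hTi : ∀ i, Measurable fun ω => HT t ω i := fun i => (measurable_pi_apply i).comp hT
  have hPi : ∀ i, Measurable fun ω => γp t ω i := fun i => (measurable_pi_apply i).comp hP
  have hQi : ∀ i, Measurable fun ω => γm t ω i := fun i => (measurable_pi_apply i).comp hQ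
  apply Measurable.sub
  · exact Finset.measurable_sum _ fun i _ => (hai i).mul ((hTi i).sub (hMi i))
  · refine Finset.measurable_sum _ fun i _ => Measurable.add ?_ ?_
    · exact (hPi i).mul ((hai i).max measurable_const)
    · exact (hQi i).mul ((hai i).neg.max measurable_const)

/-- If `ã` is an `ε`-approximate minimizer of `E_P[exp(-G(a))]` and `Q̃`
has density `exp(-G(ã))/E_P[exp(-G(ã))]`, then every admissible policy `a` satisfies
`Ũ_λ(G(a)) ≤ (1/λ) log(1+ε)` for every risk aversion `λ ∈ (0,∞)`. -/
theorem stmt_12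
    {mΩ : MeasurableSpace Ω} (P : Measure Ω) [IsProbabilityMeasure P]
    (m n : ℕ) (F : ℕ → MeasurableSpace Ω) (hF_mono : Monotone F) (hF_le : ∀ t, F t ≤ mΩ)
    (Hmid HT : ℕ → Ω → Fin n → ℝ)
    (hHmid_meas : ∀ t < m, Measurable[F t] (Hmid t))
    (hHT_meas : ∀ t < m, Measurable[F m] (HT t))
    (hHmid_bdd : ∀ t < m, ∃ C : ℝ, ∀ᵐ ω ∂P, ∀ i, |Hmid t ω i| ≤ C)
    (hHT_bdd : ∀ t < m, ∃ C : ℝ, ∀ᵐ ω ∂P, ∀ i, |HT t ω i| ≤ C)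
    (γp γm : ℕ → Ω → Fin n → ℝ)
    (hγp_meas : ∀ t < m, Measurable[F t] (γp t)) (hγm_meas : ∀ t < m, Measurable[F t] (γm t))
    (hγp_nonneg : ∀ t ω i, 0 ≤ γp t ω i) (hγm_nonneg : ∀ t ω i, 0 ≤ γm t ω i)
    (ε : ℝ) (hε : 0 < ε)
    (astar : ℕ → Ω → Fin n → ℝ) (hastar : IsPolicy P m n F astar)
    (hmin : ∀ a, IsPolicy P m n F a →
      (∫⁻ ω, ENNReal.ofReal (Real.exp (-propGain m n Hmid HT γp γm astar ω)) ∂P) ≤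
        ∫⁻ ω, ENNReal.ofReal (Real.exp (-propGain m n Hmid HT γp γm a ω)) ∂P)
    (atil : ℕ → Ω → Fin n → ℝ) (hatil : IsPolicy P m n F atil)
    (htil_pos : 0 < ∫⁻ ω, ENNReal.ofReal (Real.exp (-propGain m n Hmid HT γp γm atil ω)) ∂P)
    (htil_fin : (∫⁻ ω, ENNReal.ofReal (Real.exp (-propGain m n Hmid HT γp γm atil ω)) ∂P) ≠ ∞)
    (happrox : (∫⁻ ω, ENNReal.ofReal (Real.exp (-propGain m n Hmid HT γp γm atil ω)) ∂P) ≤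
      ENNReal.ofReal (1 + ε) *
        ∫⁻ ω, ENNReal.ofReal (Real.exp (-propGain m n Hmid HT γp γm astar ω)) ∂P) :
    let Qtil : Measure Ω := P.withDensity (fun ω =>
      ENNReal.ofReal (Real.exp (-propGain m n Hmid HT γp γm atil ω)) /
        ∫⁻ ω', ENNReal.ofReal (Real.exp (-propGain m n Hmid HT γp γm atil ω')) ∂P)
    ∀ l : ℝ, 0 < l → ∀ a, IsPolicy P m n F a →
      entU Qtil l (propGain m n Hmid HT γp γm a) ≤ (((1 / l) * Real.log (1 + ε) : ℝ) : EReal) := by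
  intro Qtil l hl a ha
  set Ga := propGain m n Hmid HT γp γm a with hGa
  set Gtil := propGain m n Hmid HT γp γm atil with hGtil
  set c := ∫⁻ ω, ENNReal.ofReal (Real.exp (-Gtil ω)) ∂P with hc
  set J := ∫⁻ ω, ENNReal.ofReal (Real.exp (-propGain m n Hmid HT γp γm astar ω)) ∂P with hJ
  -- combined policy
  set b : ℕ → Ω → Fin n → ℝ := fun t ω i => l * a t ω i + atil t ω i with hbdef
  have hb : IsPolicy P m n F b := by
    intro t ht
    obtain ⟨ham, Ca, hCa⟩ := ha t ht
    obtain ⟨htm, Ct, hCt⟩ := hatil t ht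
    constructor
    · letI : MeasurableSpace Ω := F t
      exact measurable_pi_lambda _ fun i =>
        (((measurable_pi_apply i).comp ham).const_mul l).add
          ((measurable_pi_apply i).comp htm)
    · refine ⟨|l| * Ca + Ct, ?_⟩
      filter_upwards [hCa, hCt] with ω h1 h2 i
      calc |l * a t ω i + atil t ω i| ≤ |l * a t ω i| + |atil t ω i| := abs_add_le _ _
        _ = |l| * |a t ω i| + |atil t ω i| := by rw [abs_mul]
        _ ≤ |l| * Ca + Ct := by
            have ha1 := h1 i; have ha2 := h2 i
            nlinarith [abs_nonneg l, abs_nonneg (a t ω i)]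
  -- measurability
  have hmeasGa : Measurable Ga := propGain_meas m n F hF_le Hmid HT γp γm hHmid_meas
    hHT_meas hγp_meas hγm_meas a (fun t ht => (ha t ht).1)
  have hmeasGtil : Measurable Gtil := propGain_meas m n F hF_le Hmid HT γp γm hHmid_meas
    hHT_meas hγp_meas hγm_meas atil (fun t ht => (hatil t ht).1)
  have hc0 : c ≠ 0 := htil_pos.ne'
  have hcfin : c ≠ ∞ := htil_fin
  have hεpos : (0:ℝ) < 1 + ε := by linarith
  have hof0 : ENNReal.ofReal (1 + ε) ≠ 0 := by
    simp [ENNReal.ofReal_eq_zero, not_le, hεpos]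
  have hoffin : ENNReal.ofReal (1 + ε) ≠ ∞ := ENNReal.ofReal_ne_top
  -- the integral under Qtil
  set K := ∫⁻ ω, ENNReal.ofReal (Real.exp (-l * Ga ω + -Gtil ω)) ∂P with hK
  have hI : (∫⁻ ω, ENNReal.ofReal (Real.exp (-l * Ga ω)) ∂Qtil) = c⁻¹ * K := by
    have hdens : Measurable fun ω => ENNReal.ofReal (Real.exp (-Gtil ω)) / c :=
      (hmeasGtil.neg.exp.ennreal_ofReal).div_const c
    have hg : Measurable fun ω => ENNReal.ofReal (Real.exp (-l * Ga ω)) :=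
      ((hmeasGa.const_mul (-l)).exp).ennreal_ofReal
    rw [show Qtil = P.withDensity (fun ω => ENNReal.ofReal (Real.exp (-Gtil ω)) / c) from rfl,
      lintegral_withDensity_eq_lintegral_mul P hdens hg]
    have hpt : ∀ ω, (fun ω => ENNReal.ofReal (Real.exp (-Gtil ω)) / c) ω *
        ENNReal.ofReal (Real.exp (-l * Ga ω)) =
        c⁻¹ * ENNReal.ofReal (Real.exp (-l * Ga ω + -Gtil ω)) := by
      intro ω
      simp only [Real.exp_add, ENNReal.ofReal_mul (Real.exp_nonneg _), div_eq_mul_inv]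
      ring
    simp only [Pi.mul_apply]
    have hmK : Measurable fun ω => ENNReal.ofReal (Real.exp (-l * Ga ω + -Gtil ω)) :=
      (((hmeasGa.const_mul (-l)).add hmeasGtil.neg).exp).ennreal_ofReal
    rw [lintegral_congr hpt, lintegral_const_mul _ hmK]
  have hJK : J ≤ K := by
    refine (hmin b hb).trans (lintegral_mono fun ω => ENNReal.ofReal_le_ofReal ?_)
    apply Real.exp_le_exp.mpr
    have := propGain_superadd m n Hmid HT γp γm hγp_nonneg hγm_nonneg a atil l hl.le ω
    simp only [← hGa, ← hGtil] at this ⊢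
    nlinarith [this]
  have hJlow : c / ENNReal.ofReal (1 + ε) ≤ J := by
    rw [ENNReal.div_le_iff_le_mul (Or.inl hof0) (Or.inl hoffin)]
    rw [mul_comm]
    exact happrox
  have hIlow : (ENNReal.ofReal (1 + ε))⁻¹ ≤ ∫⁻ ω, ENNReal.ofReal (Real.exp (-l * Ga ω)) ∂Qtil := by
    rw [hI]
    calc (ENNReal.ofReal (1 + ε))⁻¹ = c⁻¹ * (c / ENNReal.ofReal (1 + ε)) := by
          rw [div_eq_mul_inv, ← mul_assoc, ENNReal.inv_mul_cancel hc0 hcfin, one_mul]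
      _ ≤ c⁻¹ * J := by gcongr
      _ ≤ c⁻¹ * K := by gcongr
  -- conclude
  have hlog : (-(ENNReal.log (∫⁻ ω, ENNReal.ofReal (Real.exp (-l * Ga ω)) ∂Qtil))) ≤
      ((Real.log (1 + ε) : ℝ) : EReal) := by
    have h1 : ENNReal.log (ENNReal.ofReal (1 + ε))⁻¹ ≤
        ENNReal.log (∫⁻ ω, ENNReal.ofReal (Real.exp (-l * Ga ω)) ∂Qtil) :=
      ENNReal.log_monotone hIlow
    rw [ENNReal.log_inv, ENNReal.log_ofReal_of_pos hεpos] at h1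
    exact EReal.neg_le_of_neg_le h1
  have hfin : entU Qtil l Ga ≤ ((Real.log (1 + ε) : ℝ) : EReal) * (((1 / l : ℝ)) : EReal) := by
    unfold entU
    exact mul_le_mul_of_nonneg_right hlog (by
      apply EReal.coe_nonneg.mpr; positivity)
  refine hfin.trans_eq ?_
  rw [← EReal.coe_mul, mul_comm]
end
end

section
/- Let λ ∈ (0,∞). Let a° be an admissible policy minimizing E_P[exp(−G(a))] over admissible policies, with 0 < E_P[exp(−G(a°))] < ∞, and define Q* by dQ*/dP = exp(−G(a°)) / E_P[exp(−G(a°))]. For a bounded 𝓕_m-measurable payoff Z define the Deep Hedging values g_λ(Z) := sup over admissible a of U_λ(Z + G(a)), g_λ := g_λ(0), and g*_λ(Z) := sup over admissible a of U^{Q*}_λ(Z + G(a)). Then g*_λ(Z) ≤ g_λ(Z) − g_λ, with equality when the spreads are identically zero. -/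
open MeasureTheory ENNReal Real Filter Set

noncomputable section

variable {Ω : Type*}

/-!
With `κ = λ⁻¹ log E_P[exp(-G(a°))]`, the change of measure to `Q*` reads
`U^{Q*}_λ(X) = U_λ(X + G(a°)/λ) + κ`. The gain is positively homogeneous in the policy and, since
proportional costs are subadditive, superadditive; hence `U_λ(Z + G(a) + G(a°)/λ)` is at most
`U_λ(Z + G(a + a°/λ))`, which gives `g*_λ(Z) ≤ g_λ(Z) + κ`. Homogeneity and the optimality of `a°`
show `g_λ = -κ`, attained at `a°/λ`. Without costs the gain is additive, and the substitution
`a = b - a°/λ` reverses the inequality.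
-/

lemma entU_add_const {mΩ : MeasurableSpace Ω} (P : Measure Ω) {l : ℝ} (hl : 0 < l)
    (X : Ω → ℝ) (r : ℝ) :
    entU P l (fun ω => X ω + r) = entU P l X + r := by
  have hint : ∫⁻ ω, ENNReal.ofReal (Real.exp (-l * (X ω + r))) ∂P
      = ENNReal.ofReal (Real.exp (-l * r)) * ∫⁻ ω, ENNReal.ofReal (Real.exp (-l * X ω)) ∂P := by
    rw [← lintegral_const_mul' _ _ ofReal_ne_top]
    refine lintegral_congr fun ω => ?_
    rw [← ENNReal.ofReal_mul (Real.exp_pos _).le, ← Real.exp_add]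
    ring_nf
  unfold entU
  rw [hint, ENNReal.log_mul_add, ENNReal.log_ofReal_of_pos (Real.exp_pos _), Real.log_exp]
  generalize ENNReal.log (∫⁻ ω, ENNReal.ofReal (Real.exp (-l * X ω)) ∂P) = L
  have hl' : 0 < 1 / l := one_div_pos.2 hl
  induction L using EReal.rec with
  | bot => rw [EReal.add_bot, EReal.neg_bot, EReal.top_mul_coe_of_pos hl', EReal.top_add_coe]
  | coe L => norm_cast; field_simp; ring
  | top => rw [EReal.coe_add_top, EReal.neg_top, EReal.bot_mul_coe_of_pos hl', EReal.bot_add]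

lemma entU_div_self {mΩ : MeasurableSpace Ω} (P : Measure Ω) {l : ℝ} (hl : l ≠ 0) (W : Ω → ℝ) :
    entU P l (fun ω => W ω / l)
      = -ENNReal.log (∫⁻ ω, ENNReal.ofReal (Real.exp (-W ω)) ∂P) * ((1 / l : ℝ) : EReal) := by
  unfold entU
  congr 4 with ω
  field_simp

lemma entU_mono {mΩ : MeasurableSpace Ω} (P : Measure Ω) {l : ℝ} (hl : 0 < l)
    {X Y : Ω → ℝ} (h : ∀ᵐ ω ∂P, X ω ≤ Y ω) : entU P l X ≤ entU P l Y := by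
  unfold entU
  refine mul_le_mul_of_nonneg_right ?_ (EReal.coe_nonneg.mpr (by positivity))
  refine EReal.neg_le_neg_iff.mpr (ENNReal.log_monotone (lintegral_mono_ae ?_))
  filter_upwards [h] with ω hω
  exact ENNReal.ofReal_le_ofReal (Real.exp_le_exp.mpr (by nlinarith))

lemma entU_withDensity_exp_neg {mΩ : MeasurableSpace Ω} (P : Measure Ω) {l : ℝ} (hl : l ≠ 0)
    {Y : Ω → ℝ} (hY : Measurable Y) (X : Ω → ℝ) :
    entU (P.withDensity fun ω => ENNReal.ofReal (Real.exp (-Y ω))) l X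
      = entU P l (fun ω => X ω + Y ω / l) := by
  unfold entU
  rw [lintegral_withDensity_eq_lintegral_mul_non_measurable _
    (f := fun ω => ENNReal.ofReal (Real.exp (-Y ω))) (by fun_prop)
    (ae_of_all _ fun _ => ofReal_lt_top)]
  congr 3
  refine lintegral_congr fun ω => ?_
  rw [Pi.mul_apply, ← ENNReal.ofReal_mul (Real.exp_pos _).le, ← Real.exp_add]
  field_simp
  ring_nf

lemma ofReal_exp_neg_div {c : ℝ≥0∞} (hc0 : c ≠ 0) (hc : c ≠ ∞) (y : ℝ) :
    ENNReal.ofReal (Real.exp (-y)) / c = ENNReal.ofReal (Real.exp (-(y + Real.log c.toReal))) := by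
  have hpos : 0 < c.toReal := ENNReal.toReal_pos hc0 hc
  rw [neg_add, Real.exp_add, Real.exp_neg (Real.log _), Real.exp_log hpos, ← div_eq_mul_inv,
    ENNReal.ofReal_div_of_pos hpos, ENNReal.ofReal_toReal hc]

lemma entU_withDensity_exp_neg_div {mΩ : MeasurableSpace Ω} (P : Measure Ω) {l : ℝ} (hl : 0 < l)
    {Y : Ω → ℝ} (hY : Measurable Y) (hc0 : ∫⁻ ω, ENNReal.ofReal (Real.exp (-Y ω)) ∂P ≠ 0)
    (hc : ∫⁻ ω, ENNReal.ofReal (Real.exp (-Y ω)) ∂P ≠ ∞) (X : Ω → ℝ) :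
    entU (P.withDensity fun ω => ENNReal.ofReal (Real.exp (-Y ω)) /
        ∫⁻ ω', ENNReal.ofReal (Real.exp (-Y ω')) ∂P) l X
      = entU P l (fun ω => X ω + Y ω / l)
        + ((Real.log (∫⁻ ω, ENNReal.ofReal (Real.exp (-Y ω)) ∂P).toReal / l : ℝ) : EReal) := by
  set k := Real.log (∫⁻ ω, ENNReal.ofReal (Real.exp (-Y ω)) ∂P).toReal
  simp_rw [ofReal_exp_neg_div hc0 hc]
  rw [entU_withDensity_exp_neg P hl.ne' (hY.add_const k), ← entU_add_const P hl]
  congr 1 with ω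
  ring

section Market

variable {mΩ : MeasurableSpace Ω} {P Q : Measure Ω} {m n : ℕ} {F : ℕ → MeasurableSpace Ω}
  {Hmid HT γp γm acirc : ℕ → Ω → Fin n → ℝ} {l κ : ℝ}

local notation "𝒢" => propGain m n Hmid HT γp γm

lemma propGain_smul_s13 (a : ℕ → Ω → Fin n → ℝ) {r : ℝ} (hr : 0 ≤ r) (ω : Ω) :
    𝒢 (r • a) ω = r * 𝒢 a ω := by
  have hmax : ∀ x : ℝ, max (r * x) 0 = r * max x 0 := fun x => by
    rw [mul_max_of_nonneg x 0 hr, mul_zero]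
  simp only [propGain, Pi.smul_apply, smul_eq_mul, Finset.mul_sum, mul_sub, ← mul_neg, hmax]
  congr 1 with t
  congr 1 <;> congr 1 with i <;> ring

lemma propGain_add_le (hγp : ∀ t ω i, 0 ≤ γp t ω i) (hγm : ∀ t ω i, 0 ≤ γm t ω i)
    (a b : ℕ → Ω → Fin n → ℝ) (ω : Ω) :
    𝒢 a ω + 𝒢 b ω ≤ 𝒢 (a + b) ω := by
  simp only [propGain, ← Finset.sum_add_distrib, Pi.add_apply]
  refine Finset.sum_le_sum fun t _ => ?_
  have hcost : ∑ i, (γp t ω i * max (a t ω i + b t ω i) 0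
        + γm t ω i * max (-(a t ω i + b t ω i)) 0)
      ≤ ∑ i, (γp t ω i * max (a t ω i) 0 + γm t ω i * max (-a t ω i) 0)
        + ∑ i, (γp t ω i * max (b t ω i) 0 + γm t ω i * max (-b t ω i) 0) := by
    rw [← Finset.sum_add_distrib]
    refine Finset.sum_le_sum fun i _ => ?_
    have hpos : max (a t ω i + b t ω i) 0 ≤ max (a t ω i) 0 + max (b t ω i) 0 :=
      max_le (add_le_add (le_max_left _ _) (le_max_left _ _)) (by positivity)
    have hneg : max (-(a t ω i + b t ω i)) 0 ≤ max (-a t ω i) 0 + max (-b t ω i) 0 :=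
      max_le (by rw [neg_add]; exact add_le_add (le_max_left _ _) (le_max_left _ _))
        (by positivity)
    linarith [mul_le_mul_of_nonneg_left hpos (hγp t ω i),
      mul_le_mul_of_nonneg_left hneg (hγm t ω i)]
  have hlin : ∑ i, (a t ω i + b t ω i) * (HT t ω i - Hmid t ω i)
      = ∑ i, a t ω i * (HT t ω i - Hmid t ω i) + ∑ i, b t ω i * (HT t ω i - Hmid t ω i) := by
    rw [← Finset.sum_add_distrib]; simp only [add_mul]
  linarith

lemma propGain_add (h0 : ∀ t < m, ∀ ω i, γp t ω i = 0 ∧ γm t ω i = 0)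
    (a b : ℕ → Ω → Fin n → ℝ) (ω : Ω) :
    𝒢 (a + b) ω = 𝒢 a ω + 𝒢 b ω := by
  simp only [propGain, ← Finset.sum_add_distrib, Pi.add_apply]
  refine Finset.sum_congr rfl fun t ht => ?_
  have hzero := h0 t (Finset.mem_range.mp ht) ω
  simp [hzero, add_mul, Finset.sum_add_distrib]

lemma measurable_propGain {a : ℕ → Ω → Fin n → ℝ}
    (hHmid : ∀ t < m, Measurable (Hmid t)) (hHT : ∀ t < m, Measurable (HT t))
    (hγp : ∀ t < m, Measurable (γp t)) (hγm : ∀ t < m, Measurable (γm t))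
    (ha : ∀ t < m, Measurable (a t)) :
    Measurable (𝒢 a) := by
  refine Finset.measurable_sum _ fun t ht => ?_
  have ht := Finset.mem_range.mp ht
  refine Measurable.sub ?_ ?_
  · exact Finset.measurable_sum _ fun i _ =>
      ((ha t ht).eval).mul (((hHT t ht).eval).sub ((hHmid t ht).eval))
  · exact Finset.measurable_sum _ fun i _ =>
      (((hγp t ht).eval).mul (((ha t ht).eval).max measurable_const)).add
        (((hγm t ht).eval).mul ((((ha t ht).eval).neg).max measurable_const))

lemma IsPolicy.smul {a : ℕ → Ω → Fin n → ℝ} (ha : IsPolicy P m n F a) (r : ℝ) :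
    IsPolicy P m n F (r • a) := by
  intro t ht
  obtain ⟨hmeas, C, hC⟩ := ha t ht
  refine ⟨hmeas.const_smul r, |r| * C, ?_⟩
  filter_upwards [hC] with ω hω i
  simpa [abs_mul] using mul_le_mul_of_nonneg_left (hω i) (abs_nonneg r)

lemma IsPolicy.add {a b : ℕ → Ω → Fin n → ℝ} (ha : IsPolicy P m n F a)
    (hb : IsPolicy P m n F b) :
    IsPolicy P m n F (a + b) := by
  intro t ht
  obtain ⟨hameas, C, hC⟩ := ha t ht
  obtain ⟨hbmeas, D, hD⟩ := hb t ht
  refine ⟨hameas.add hbmeas, C + D, ?_⟩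
  filter_upwards [hC, hD] with ω hωa hωb i
  exact (abs_add_le _ _).trans (add_le_add (hωa i) (hωb i))

lemma IsPolicy.sub {a b : ℕ → Ω → Fin n → ℝ} (ha : IsPolicy P m n F a)
    (hb : IsPolicy P m n F b) :
    IsPolicy P m n F (a - b) := by
  simpa [sub_eq_add_neg] using ha.add (hb.smul (-1))

theorem iSup_entU_propGain_eq (hl : 0 < l) (hacirc : IsPolicy P m n F acirc)
    (hmin : ∀ a, IsPolicy P m n F a →
      ∫⁻ ω, ENNReal.ofReal (Real.exp (-𝒢 acirc ω)) ∂P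
        ≤ ∫⁻ ω, ENNReal.ofReal (Real.exp (-𝒢 a ω)) ∂P)
    (hc0 : ∫⁻ ω, ENNReal.ofReal (Real.exp (-𝒢 acirc ω)) ∂P ≠ 0)
    (hc : ∫⁻ ω, ENNReal.ofReal (Real.exp (-𝒢 acirc ω)) ∂P ≠ ∞) :
    ⨆ a : {a : ℕ → Ω → Fin n → ℝ // IsPolicy P m n F a}, entU P l (fun ω => 0 + 𝒢 a.1 ω)
      = ((-(Real.log (∫⁻ ω, ENNReal.ofReal (Real.exp (-𝒢 acirc ω)) ∂P).toReal / l) : ℝ) :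
          EReal) := by
  have hvalue : ∀ a, entU P l (fun ω => 0 + 𝒢 a ω)
      = -ENNReal.log (∫⁻ ω, ENNReal.ofReal (Real.exp (-𝒢 (l • a) ω)) ∂P)
          * ((1 / l : ℝ) : EReal) := fun a => by
    rw [← entU_div_self P hl.ne']
    congr 1 with ω
    rw [propGain_smul_s13 a hl.le]
    field_simp
    ring
  have hvalue_acirc : entU P l (fun ω => 0 + 𝒢 ((1 / l) • acirc) ω)
      = -ENNReal.log (∫⁻ ω, ENNReal.ofReal (Real.exp (-𝒢 acirc ω)) ∂P)
          * ((1 / l : ℝ) : EReal) := by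
    rw [hvalue, smul_smul, mul_one_div_cancel hl.ne', one_smul]
  calc _ = -ENNReal.log (∫⁻ ω, ENNReal.ofReal (Real.exp (-𝒢 acirc ω)) ∂P)
          * ((1 / l : ℝ) : EReal) := by
        refine le_antisymm (iSup_le fun a => ?_)
          (le_iSup_of_le ⟨_, hacirc.smul _⟩ hvalue_acirc.ge)
        rw [hvalue]
        exact mul_le_mul_of_nonneg_right
          (EReal.neg_le_neg_iff.mpr (ENNReal.log_monotone (hmin _ (a.2.smul l))))
          (EReal.coe_nonneg.mpr (by positivity))
    _ = _ := by
        rw [ENNReal.log_pos_real hc0 hc]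
        norm_cast
        ring

theorem iSup_entU_le_iSup_entU_add (hl : 0 < l) (hγp : ∀ t ω i, 0 ≤ γp t ω i)
    (hγm : ∀ t ω i, 0 ≤ γm t ω i) (hacirc : IsPolicy P m n F acirc)
    (hQ : ∀ X, entU Q l X = entU P l (fun ω => X ω + 𝒢 acirc ω / l) + κ) (Z : Ω → ℝ) :
    ⨆ a : {a : ℕ → Ω → Fin n → ℝ // IsPolicy P m n F a}, entU Q l (fun ω => Z ω + 𝒢 a.1 ω)
      ≤ (⨆ a : {a : ℕ → Ω → Fin n → ℝ // IsPolicy P m n F a},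
          entU P l (fun ω => Z ω + 𝒢 a.1 ω)) + κ := by
  refine iSup_le fun a => ?_
  rw [hQ]
  refine add_le_add_left (le_iSup_of_le ⟨a.1 + (1 / l) • acirc, a.2.add (hacirc.smul _)⟩ ?_) _
  refine entU_mono P hl (ae_of_all _ fun ω => ?_)
  have hsuper : 𝒢 a.1 ω + 𝒢 ((1 / l) • acirc) ω ≤ 𝒢 (a.1 + (1 / l) • acirc) ω :=
    propGain_add_le hγp hγm _ _ ω
  rw [propGain_smul_s13 acirc (by positivity), one_div_mul_eq_div] at hsuper
  exact (add_assoc _ _ _).trans_le (add_le_add_right hsuper _)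

theorem iSup_entU_add_le_iSup_entU (h0 : ∀ t < m, ∀ ω i, γp t ω i = 0 ∧ γm t ω i = 0)
    (hl : 0 < l) (hacirc : IsPolicy P m n F acirc)
    (hQ : ∀ X, entU Q l X = entU P l (fun ω => X ω + 𝒢 acirc ω / l) + κ) (Z : Ω → ℝ) :
    (⨆ a : {a : ℕ → Ω → Fin n → ℝ // IsPolicy P m n F a},
        entU P l (fun ω => Z ω + 𝒢 a.1 ω)) + κ
      ≤ ⨆ a : {a : ℕ → Ω → Fin n → ℝ // IsPolicy P m n F a},
          entU Q l (fun ω => Z ω + 𝒢 a.1 ω) := by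
  refine EReal.add_le_of_le_sub (iSup_le fun b => ?_)
  have hsplit : ∀ ω, Z ω + 𝒢 b.1 ω = Z ω + 𝒢 (b.1 - (1 / l) • acirc) ω + 𝒢 acirc ω / l := by
    intro ω
    have hscale : 𝒢 acirc ω / l = 𝒢 ((1 / l) • acirc) ω := by
      rw [propGain_smul_s13 acirc (by positivity)]
      ring
    rw [hscale, add_assoc, ← propGain_add h0, sub_add_cancel]
  calc entU P l (fun ω => Z ω + 𝒢 b.1 ω)
      = entU Q l (fun ω => Z ω + 𝒢 (b.1 - (1 / l) • acirc) ω) - κ := by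
        rw [hQ, EReal.add_sub_cancel_right]
        simp_rw [hsplit]
    _ ≤ _ := EReal.sub_le_sub (le_iSup_of_le ⟨_, b.2.sub (hacirc.smul _)⟩ le_rfl) le_rfl

end Market

theorem stmt_13_general
    {mΩ : MeasurableSpace Ω} (P : Measure Ω)
    (m n : ℕ) (F : ℕ → MeasurableSpace Ω) (hF_le : ∀ t, F t ≤ mΩ)
    (Hmid HT : ℕ → Ω → Fin n → ℝ)
    (hHmid_meas : ∀ t < m, Measurable[F t] (Hmid t))
    (hHT_meas : ∀ t < m, Measurable[F m] (HT t))
    (γp γm : ℕ → Ω → Fin n → ℝ)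
    (hγp_meas : ∀ t < m, Measurable[F t] (γp t)) (hγm_meas : ∀ t < m, Measurable[F t] (γm t))
    (hγp_nonneg : ∀ t ω i, 0 ≤ γp t ω i) (hγm_nonneg : ∀ t ω i, 0 ≤ γm t ω i)
    (l : ℝ) (hl : 0 < l)
    (acirc : ℕ → Ω → Fin n → ℝ) (hacirc : IsPolicy P m n F acirc)
    (hmin : ∀ a, IsPolicy P m n F a →
      (∫⁻ ω, ENNReal.ofReal (Real.exp (-propGain m n Hmid HT γp γm acirc ω)) ∂P) ≤
        ∫⁻ ω, ENNReal.ofReal (Real.exp (-propGain m n Hmid HT γp γm a ω)) ∂P)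
    (hZpos : 0 < ∫⁻ ω, ENNReal.ofReal (Real.exp (-propGain m n Hmid HT γp γm acirc ω)) ∂P)
    (hZfin : (∫⁻ ω, ENNReal.ofReal (Real.exp (-propGain m n Hmid HT γp γm acirc ω)) ∂P) ≠ ∞)
    (Z : Ω → ℝ) :
    let Qstar : Measure Ω := P.withDensity (fun ω =>
      ENNReal.ofReal (Real.exp (-propGain m n Hmid HT γp γm acirc ω)) /
        ∫⁻ ω', ENNReal.ofReal (Real.exp (-propGain m n Hmid HT γp γm acirc ω')) ∂P)
    let gP : (Ω → ℝ) → EReal := fun W =>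
      ⨆ a : {a : ℕ → Ω → Fin n → ℝ // IsPolicy P m n F a},
        entU P l (fun ω => W ω + propGain m n Hmid HT γp γm a.1 ω)
    let gQ : (Ω → ℝ) → EReal := fun W =>
      ⨆ a : {a : ℕ → Ω → Fin n → ℝ // IsPolicy P m n F a},
        entU Qstar l (fun ω => W ω + propGain m n Hmid HT γp γm a.1 ω)
    gQ Z ≤ gP Z - gP (fun _ => 0) ∧
      ((∀ t < m, ∀ ω i, γp t ω i = 0 ∧ γm t ω i = 0) → gQ Z = gP Z - gP (fun _ => 0)) := by
  intro Qstar gP gQ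
  have hG : Measurable (propGain m n Hmid HT γp γm acirc) :=
    measurable_propGain (fun t ht => (hHmid_meas t ht).mono (hF_le t) le_rfl)
      (fun t ht => (hHT_meas t ht).mono (hF_le m) le_rfl)
      (fun t ht => (hγp_meas t ht).mono (hF_le t) le_rfl)
      (fun t ht => (hγm_meas t ht).mono (hF_le t) le_rfl)
      (fun t ht => ((hacirc t ht).1).mono (hF_le t) le_rfl)
  have hQ := entU_withDensity_exp_neg_div P hl hG hZpos.ne' hZfin
  have hg0 : gP (fun _ => 0) = _ := iSup_entU_propGain_eq hl hacirc hmin hZpos.ne' hZfin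
  rw [hg0, sub_eq_add_neg, ← EReal.coe_neg, neg_neg]
  exact ⟨iSup_entU_le_iSup_entU_add hl hγp_nonneg hγm_nonneg hacirc hQ Z, fun h0 =>
    (iSup_entU_le_iSup_entU_add hl hγp_nonneg hγm_nonneg hacirc hQ Z).antisymm
      (iSup_entU_add_le_iSup_entU h0 hl hacirc hQ Z)⟩

/-- Let `Q*` have density `exp(-G(a°))/E_P[exp(-G(a°))]` with `a°` the
optimal statistical arbitrage policy. Then the Deep Hedging values satisfy
`g*_λ(Z) ≤ g_λ(Z) - g_λ`, with equality when the spreads vanish. -/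
theorem stmt_13
    {mΩ : MeasurableSpace Ω} (P : Measure Ω) [IsProbabilityMeasure P]
    (m n : ℕ) (F : ℕ → MeasurableSpace Ω) (hF_mono : Monotone F) (hF_le : ∀ t, F t ≤ mΩ)
    (Hmid HT : ℕ → Ω → Fin n → ℝ)
    (hHmid_meas : ∀ t < m, Measurable[F t] (Hmid t))
    (hHT_meas : ∀ t < m, Measurable[F m] (HT t))
    (hHmid_bdd : ∀ t < m, ∃ C : ℝ, ∀ᵐ ω ∂P, ∀ i, |Hmid t ω i| ≤ C)
    (hHT_bdd : ∀ t < m, ∃ C : ℝ, ∀ᵐ ω ∂P, ∀ i, |HT t ω i| ≤ C)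
    (γp γm : ℕ → Ω → Fin n → ℝ)
    (hγp_meas : ∀ t < m, Measurable[F t] (γp t)) (hγm_meas : ∀ t < m, Measurable[F t] (γm t))
    (hγp_nonneg : ∀ t ω i, 0 ≤ γp t ω i) (hγm_nonneg : ∀ t ω i, 0 ≤ γm t ω i)
    (l : ℝ) (hl : 0 < l)
    (acirc : ℕ → Ω → Fin n → ℝ) (hacirc : IsPolicy P m n F acirc)
    (hmin : ∀ a, IsPolicy P m n F a →
      (∫⁻ ω, ENNReal.ofReal (Real.exp (-propGain m n Hmid HT γp γm acirc ω)) ∂P) ≤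
        ∫⁻ ω, ENNReal.ofReal (Real.exp (-propGain m n Hmid HT γp γm a ω)) ∂P)
    (hZpos : 0 < ∫⁻ ω, ENNReal.ofReal (Real.exp (-propGain m n Hmid HT γp γm acirc ω)) ∂P)
    (hZfin : (∫⁻ ω, ENNReal.ofReal (Real.exp (-propGain m n Hmid HT γp γm acirc ω)) ∂P) ≠ ∞)
    (Z : Ω → ℝ) (hZmeas : Measurable[F m] Z) (hZbdd : ∃ C : ℝ, ∀ ω, |Z ω| ≤ C) :
    let Qstar : Measure Ω := P.withDensity (fun ω =>
      ENNReal.ofReal (Real.exp (-propGain m n Hmid HT γp γm acirc ω)) /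
        ∫⁻ ω', ENNReal.ofReal (Real.exp (-propGain m n Hmid HT γp γm acirc ω')) ∂P)
    let gP : (Ω → ℝ) → EReal := fun W =>
      ⨆ a : {a : ℕ → Ω → Fin n → ℝ // IsPolicy P m n F a},
        entU P l (fun ω => W ω + propGain m n Hmid HT γp γm a.1 ω)
    let gQ : (Ω → ℝ) → EReal := fun W =>
      ⨆ a : {a : ℕ → Ω → Fin n → ℝ // IsPolicy P m n F a},
        entU Qstar l (fun ω => W ω + propGain m n Hmid HT γp γm a.1 ω)
    gQ Z ≤ gP Z - gP (fun _ => 0) ∧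
      ((∀ t < m, ∀ ω i, γp t ω i = 0 ∧ γm t ω i = 0) → gQ Z = gP Z - gP (fun _ => 0)) :=
  stmt_13_general P m n F hF_le Hmid HT hHmid_meas hHT_meas γp γm hγp_meas hγm_meas hγp_nonneg
    hγm_nonneg l hl acirc hacirc hmin hZpos hZfin Z
end
end

section
/- Assume transaction costs are zero, so G(a) = Σ_{t<m} a_t·(H_T^{(t)} − H_t^{(t)}) and all policies are admissible, and fix λ ∈ (0,∞) and a bounded 𝓕_m-measurable payoff Z. Suppose a' maximizes a ↦ U_λ(Z + G(a)) over policies (a solution of the Deep Hedging problem for Z under P), and a* maximizes a ↦ U_λ(G(a)) over policies with g_λ := U_λ(G(a*)) finite (an optimal statistical arbitrage policy). Define Q* by dQ*/dP = exp(−λG(a*)) / E_P[exp(−λG(a*))]. Then the policy a' − a* solves the Deep Hedging problem for Z under Q*: U^{Q*}_λ(Z + G(a' − a*)) = sup over policies a of U^{Q*}_λ(Z + G(a)) = U_λ(Z + G(a')) − g_λ. -/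
open MeasureTheory ENNReal Real Filter Set

noncomputable section

variable {Ω : Type*}

/-- Auxiliary EReal arithmetic: `(-(A + b)) * r = (-A) * r - b * r` for real `b`, `r > 0`. -/
lemma ereal_aux (A : EReal) (b r : ℝ) (hr : 0 < r) :
    (-(A + (b : EReal))) * (r : EReal) = (-A) * (r : EReal) - ((b * r : ℝ) : EReal) := by
  induction A using EReal.rec with
  | bot =>
      rw [EReal.bot_add, show (-(⊥ : EReal)) = ⊤ from rfl,
        EReal.top_mul_coe_of_pos hr, EReal.top_sub_coe]
  | coe x =>
      norm_cast
      ring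
  | top =>
      rw [EReal.top_add_coe b, show (-(⊤ : EReal)) = ⊥ from rfl,
        EReal.bot_mul_coe_of_pos hr, EReal.bot_sub]

/-- With zero transaction costs, if `a'` solves the Deep Hedging problem
for `Z` under `P` and `a*` is an optimal statistical arbitrage policy with finite value `g_λ`,
then under `Q*` with density `exp(-λG(a*))/E_P[exp(-λG(a*))]`, the policy `a' - a*` solves the
Deep Hedging problem for `Z` under `Q*`, with value `U_λ(Z + G(a')) - g_λ`. -/
theorem stmt_14
    {mΩ : MeasurableSpace Ω} (P : Measure Ω) [IsProbabilityMeasure P]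
    (m n : ℕ) (F : ℕ → MeasurableSpace Ω) (hF_mono : Monotone F) (hF_le : ∀ t, F t ≤ mΩ)
    (Hmid HT : ℕ → Ω → Fin n → ℝ)
    (hHmid_meas : ∀ t < m, Measurable[F t] (Hmid t))
    (hHT_meas : ∀ t < m, Measurable[F m] (HT t))
    (hHmid_bdd : ∀ t < m, ∃ C : ℝ, ∀ᵐ ω ∂P, ∀ i, |Hmid t ω i| ≤ C)
    (hHT_bdd : ∀ t < m, ∃ C : ℝ, ∀ᵐ ω ∂P, ∀ i, |HT t ω i| ≤ C)
    (l : ℝ) (hl : 0 < l)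
    (Z : Ω → ℝ) (hZmeas : Measurable[F m] Z) (hZbdd : ∃ C : ℝ, ∀ ω, |Z ω| ≤ C)
    (a' astar : ℕ → Ω → Fin n → ℝ)
    (ha' : IsPolicy P m n F a') (hastar : IsPolicy P m n F astar)
    (hmaxZ : ∀ a, IsPolicy P m n F a →
      entU P l (fun ω => Z ω + linGain m n Hmid HT a ω) ≤
        entU P l (fun ω => Z ω + linGain m n Hmid HT a' ω))
    (hmaxSA : ∀ a, IsPolicy P m n F a →
      entU P l (linGain m n Hmid HT a) ≤ entU P l (linGain m n Hmid HT astar))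
    (hfin_top : entU P l (linGain m n Hmid HT astar) ≠ ⊤)
    (hfin_bot : entU P l (linGain m n Hmid HT astar) ≠ ⊥)
    (hZpos : 0 < ∫⁻ ω, ENNReal.ofReal (Real.exp (-(l * linGain m n Hmid HT astar ω))) ∂P)
    (hZfin : (∫⁻ ω, ENNReal.ofReal (Real.exp (-(l * linGain m n Hmid HT astar ω))) ∂P) ≠ ∞) :
    let Qstar : Measure Ω := P.withDensity (fun ω =>
      ENNReal.ofReal (Real.exp (-(l * linGain m n Hmid HT astar ω))) /
        ∫⁻ ω', ENNReal.ofReal (Real.exp (-(l * linGain m n Hmid HT astar ω'))) ∂P)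
    entU Qstar l (fun ω => Z ω + linGain m n Hmid HT (fun t ω' => a' t ω' - astar t ω') ω) =
        (⨆ a : {a : ℕ → Ω → Fin n → ℝ // IsPolicy P m n F a},
          entU Qstar l (fun ω => Z ω + linGain m n Hmid HT a.1 ω)) ∧
      entU Qstar l (fun ω => Z ω + linGain m n Hmid HT (fun t ω' => a' t ω' - astar t ω') ω) =
        entU P l (fun ω => Z ω + linGain m n Hmid HT a' ω) -
          entU P l (linGain m n Hmid HT astar) := by
  intro Qstar
  set G : (ℕ → Ω → Fin n → ℝ) → Ω → ℝ := linGain m n Hmid HT with hG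
  -- measurability of gains of policies
  have hGmeas : ∀ a : ℕ → Ω → Fin n → ℝ, IsPolicy P m n F a → Measurable (G a) := by
    intro a ha
    apply Finset.measurable_sum
    intro t ht
    apply Finset.measurable_sum
    intro i _
    have hti := Finset.mem_range.mp ht
    have h1 : Measurable fun ω => a t ω i :=
      ((measurable_pi_apply i).comp ((ha t hti).1)).mono (hF_le t) le_rfl
    have h2 : Measurable fun ω => HT t ω i :=
      ((measurable_pi_apply i).comp (hHT_meas t hti)).mono (hF_le m) le_rfl
    have h3 : Measurable fun ω => Hmid t ω i :=
      ((measurable_pi_apply i).comp (hHmid_meas t hti)).mono (hF_le t) le_rfl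
    exact h1.mul (h2.sub h3)
  have hZm : Measurable Z := hZmeas.mono (hF_le m) le_rfl
  -- policies closed under addition / subtraction
  have hadd : ∀ a b : ℕ → Ω → Fin n → ℝ, IsPolicy P m n F a → IsPolicy P m n F b →
      IsPolicy P m n F (fun t ω => a t ω + b t ω) := by
    intro a b ha hb t ht
    refine ⟨((ha t ht).1).add ((hb t ht).1), ?_⟩
    obtain ⟨C₁, hC₁⟩ := (ha t ht).2
    obtain ⟨C₂, hC₂⟩ := (hb t ht).2
    refine ⟨C₁ + C₂, ?_⟩
    filter_upwards [hC₁, hC₂] with ω h1 h2 i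
    calc |a t ω i + b t ω i| ≤ |a t ω i| + |b t ω i| := abs_add_le _ _
      _ ≤ C₁ + C₂ := add_le_add (h1 i) (h2 i)
  have hsub : ∀ a b : ℕ → Ω → Fin n → ℝ, IsPolicy P m n F a → IsPolicy P m n F b →
      IsPolicy P m n F (fun t ω => a t ω - b t ω) := by
    intro a b ha hb t ht
    refine ⟨((ha t ht).1).sub ((hb t ht).1), ?_⟩
    obtain ⟨C₁, hC₁⟩ := (ha t ht).2
    obtain ⟨C₂, hC₂⟩ := (hb t ht).2
    refine ⟨C₁ + C₂, ?_⟩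
    filter_upwards [hC₁, hC₂] with ω h1 h2 i
    calc |a t ω i - b t ω i| ≤ |a t ω i| + |b t ω i| := abs_sub _ _
      _ ≤ C₁ + C₂ := add_le_add (h1 i) (h2 i)
  -- linearity of the gain
  have hGadd : ∀ a b : ℕ → Ω → Fin n → ℝ, ∀ ω,
      G (fun t ω' => a t ω' + b t ω') ω = G a ω + G b ω := by
    intro a b ω
    simp only [hG, linGain, Pi.add_apply, add_mul, Finset.sum_add_distrib]
  have hGsub : ∀ a b : ℕ → Ω → Fin n → ℝ, ∀ ω,
      G (fun t ω' => a t ω' - b t ω') ω = G a ω - G b ω := by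
    intro a b ω
    simp only [hG, linGain, Pi.sub_apply, sub_mul, Finset.sum_sub_distrib]
  -- notation for the normalizing constant
  set c : ℝ≥0∞ := ∫⁻ ω, ENNReal.ofReal (Real.exp (-(l * G astar ω))) ∂P with hc
  have hc0 : c ≠ 0 := hZpos.ne'
  have hcT : c ≠ ⊤ := hZfin
  have hGstar : Measurable (G astar) := hGmeas astar hastar
  have hfmeas : Measurable fun ω => ENNReal.ofReal (Real.exp (-(l * G astar ω))) :=
    (ENNReal.measurable_ofReal.comp (Real.measurable_exp.comp (hGstar.const_mul l).neg))
  -- the key change-of-measure identity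
  have key : ∀ X : Ω → ℝ, Measurable X →
      (∫⁻ ω, ENNReal.ofReal (Real.exp (-l * X ω)) ∂Qstar) =
        (∫⁻ ω, ENNReal.ofReal (Real.exp (-l * (X ω + G astar ω))) ∂P) / c := by
    intro X hX
    have hXm : Measurable fun ω => ENNReal.ofReal (Real.exp (-l * X ω)) :=
      (ENNReal.measurable_ofReal.comp (Real.measurable_exp.comp (hX.const_mul (-l))))
    rw [show Qstar = P.withDensity (fun ω =>
        ENNReal.ofReal (Real.exp (-(l * G astar ω))) / c) from rfl,
      lintegral_withDensity_eq_lintegral_mul P (hfmeas.div_const c) hXm]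
    rw [ENNReal.div_eq_inv_mul]
    rw [← lintegral_const_mul _ ?_]
    · congr 1
      funext ω
      simp only [Pi.mul_apply]
      rw [ENNReal.div_eq_inv_mul, mul_assoc]
      congr 1
      rw [← ENNReal.ofReal_mul (Real.exp_nonneg _), ← Real.exp_add]
      congr 1
      ring
    · exact ENNReal.measurable_ofReal.comp
        (Real.measurable_exp.comp ((hX.add hGstar).const_mul (-l)))
  -- the key utility identity
  have hlogc : ENNReal.log c = ((Real.log c.toReal : ℝ) : EReal) :=
    ENNReal.log_pos_real' (ENNReal.toReal_pos hc0 hcT)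
  set lc : ℝ := Real.log c.toReal with hlc
  have hUstar : entU P l (G astar) = (((-lc) * (1 / l) : ℝ) : EReal) := by
    rw [entU]
    have : (∫⁻ ω, ENNReal.ofReal (Real.exp (-l * G astar ω)) ∂P) = c := by
      rw [hc]; congr 1; funext ω; ring_nf
    rw [this, hlogc, ← EReal.coe_neg, ← EReal.coe_mul]
  have keyU : ∀ X : Ω → ℝ, Measurable X →
      entU Qstar l X = entU P l (fun ω => X ω + G astar ω) - entU P l (G astar) := by
    intro X hX
    rw [entU, key X hX, ENNReal.div_eq_inv_mul, ENNReal.log_mul_add, ENNReal.log_inv, hlogc,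
      ← EReal.coe_neg]
    rw [add_comm]
    rw [ereal_aux _ (-lc) (1 / l) (by positivity), hUstar, entU]
  -- the two candidate functions agree after adding G astar
  have hcomb : (fun ω => (Z ω + G (fun t ω' => a' t ω' - astar t ω') ω) + G astar ω) =
      (fun ω => Z ω + G a' ω) := by
    funext ω
    rw [hGsub]
    ring
  have hpol : IsPolicy P m n F (fun t ω' => a' t ω' - astar t ω') := hsub _ _ ha' hastar
  have hXmeas : ∀ a : ℕ → Ω → Fin n → ℝ, IsPolicy P m n F a →
      Measurable (fun ω => Z ω + G a ω) := fun a ha => hZm.add (hGmeas a ha)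
  have hmain : entU Qstar l (fun ω => Z ω + G (fun t ω' => a' t ω' - astar t ω') ω) =
      entU P l (fun ω => Z ω + G a' ω) - entU P l (G astar) := by
    rw [keyU _ (hXmeas _ hpol), hcomb]
  refine ⟨?_, hmain⟩
  -- the supremum part
  apply le_antisymm
  · exact le_iSup (fun a : {a : ℕ → Ω → Fin n → ℝ // IsPolicy P m n F a} =>
      entU Qstar l (fun ω => Z ω + linGain m n Hmid HT a.1 ω)) ⟨_, hpol⟩
  · apply iSup_le
    rintro ⟨a, ha⟩
    rw [keyU _ (hXmeas a ha), hmain]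
    have heq : (fun ω => (Z ω + G a ω) + G astar ω) =
        (fun ω => Z ω + G (fun t ω' => a t ω' + astar t ω') ω) := by
      funext ω
      rw [hGadd]
      ring
    rw [heq]
    exact EReal.sub_le_sub (hmaxZ _ (hadd _ _ ha hastar)) le_rfl
end
end
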